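/- arXiv:0903.1556 — 5 statements merged into one kernel-verified Lean document; each statement's English description precedes it below -/
import Mathlib

section
/- Let n be a positive integer and let S be a (finite) set of binary vectors of length n, ordered lexicographically. For every x = (x_1,...,x_n) in S, the lexicographic index of x in S satisfies ind_S(x) = Σ_{j=1}^{n} x_j · n_S(x_1, x_2, ..., x_{j-1}, 0). -/
/-- **Cover's enumerative encoding formula (binary case).**
Binary vectors of length `n` are functions `Fin n → Fin 2` (coordinate `0` is the
first, i.e. most significant, coordinate for the lexicographic order).
`y` is lexicographically smaller than `x` iff `y k < x k` at the least index `k`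
where they differ.  The lexicographic index of `x ∈ S` is the number of elements
of `S` lexicographically smaller than `x`, and it equals
`∑_{j=1}^{n} x_j · n_S(x_1,…,x_{j-1},0)`, where `n_S(x_1,…,x_{j-1},0)` is the number
of elements of `S` whose first `j-1` coordinates agree with `x` and whose `j`-th
coordinate is `0`. -/
theorem stmt_0 (n : ℕ) (hn : 0 < n) (S : Finset (Fin n → Fin 2))
    (x : Fin n → Fin 2) (hx : x ∈ S) :
    (S.filter (fun y => ∃ k : Fin n, (∀ i : Fin n, i < k → y i = x i) ∧ y k < x k)).card =
      ∑ j : Fin n, (x j : ℕ) *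
        (S.filter (fun y => (∀ i : Fin n, i < j → y i = x i) ∧ y j = 0)).card := by
  classical
  have h1 : (S.filter (fun y => ∃ k : Fin n, (∀ i : Fin n, i < k → y i = x i) ∧ y k < x k))
      = Finset.univ.biUnion (fun j : Fin n =>
          S.filter (fun y => (∀ i : Fin n, i < j → y i = x i) ∧ y j < x j)) := by
    ext y
    simp only [Finset.mem_biUnion, Finset.mem_filter, Finset.mem_univ, true_and]
    constructor
    · rintro ⟨hy, k, hk1, hk2⟩; exact ⟨k, hy, hk1, hk2⟩
    · rintro ⟨k, hy, hk1, hk2⟩; exact ⟨hy, k, hk1, hk2⟩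
  rw [h1, Finset.card_biUnion]
  · apply Finset.sum_congr rfl
    intro j _
    have h2 : x j = 0 ∨ x j = 1 := by omega
    rcases h2 with h | h
    · rw [h]
      simp only [Fin.val_zero, zero_mul]
      convert Finset.card_empty
      rw [Finset.eq_empty_iff_forall_notMem]
      intro y hy
      rw [Finset.mem_filter] at hy
      exact absurd hy.2.2 (by omega)
    · rw [h]
      simp only [Fin.val_one, one_mul]
      congr 1
      apply Finset.filter_congr
      intro y _
      constructor
      · rintro ⟨ha, hb⟩
        refine ⟨ha, ?_⟩
        omega
      · rintro ⟨ha, hb⟩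
        exact ⟨ha, by omega⟩
  · intro a _ b _ hab
    simp only [Function.onFun]
    rw [Finset.disjoint_left]
    intro y hya hyb
    rw [Finset.mem_filter] at hya hyb
    rcases lt_or_gt_of_ne hab with hlt | hlt
    · exact absurd (hyb.2.1 a hlt ▸ hya.2.2) (lt_irrefl _)
    · exact absurd (hya.2.1 b hlt ▸ hyb.2.2) (lt_irrefl _)
end

section
/- Let 0 ≤ k ≤ n and m ≥ 0, and let F = (F_{n-k},...,F_2,F_1) be a Ferrers diagram of size m embedded in a k × (n-k) box. Then the number of Ferrers diagrams of size m embedded in the k × (n-k) box that strictly precede F in the column order equals Σ_{j=1}^{n-k} Σ_{a=F_j+1}^{F_{j-1}} N_m(a, F_{j-1},...,F_2,F_1), where F_0 := k. -/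
/-- The Ferrers diagrams embedded in a `k × η` box, represented by the vector of their
column counts read from the right: `c i` is the number of dots in column `i+1`
(counted from the right), each column has at most `k` dots, and the counts are
nonincreasing from right to left. -/
def ferrersBox (k η : ℕ) : Finset (Fin η → Fin (k + 1)) :=
  Finset.univ.filter (fun c => ∀ i j : Fin η, i ≤ j → c j ≤ c i)

/-- **The lexicographic index of a Ferrers diagram.**
Let `Fv` be a Ferrers diagram of size `m` in the `k × (n-k)` box (given by its column
counts from the right).  A diagram `G` of size `m` strictly precedes `Fv` iff
`G i > Fv i` at the least index `i` where they differ.  The number of size-`m`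
diagrams in the box strictly preceding `Fv` equals
`∑_{j=1}^{n-k} ∑_{a=F_j+1}^{F_{j-1}} N_m(a,F_{j-1},…,F_1)`, with `F_0 := k`, where
`N_m(a,F_{j-1},…,F_1)` is the number of size-`m` diagrams in the box whose rightmost
`j` columns are `(a,F_{j-1},…,F_1)`. -/
theorem stmt_8 (n k m : ℕ) (hkn : k ≤ n) (Fv : Fin (n - k) → Fin (k + 1))
    (hFv : Fv ∈ ferrersBox k (n - k)) (hm : ∑ i, (Fv i : ℕ) = m) :
    ((ferrersBox k (n - k)).filter (fun G => (∑ i, (G i : ℕ)) = m ∧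
        ∃ i, (∀ t, t < i → G t = Fv t) ∧ Fv i < G i)).card =
      ∑ j : Fin (n - k), ∑ a ∈ Finset.Icc ((Fv j : ℕ) + 1)
          (if (j : ℕ) = 0 then k
           else (Fv ⟨(j : ℕ) - 1, Nat.lt_of_le_of_lt (Nat.sub_le _ _) j.isLt⟩ : ℕ)),
        ((ferrersBox k (n - k)).filter (fun G => (∑ i, (G i : ℕ)) = m ∧
          (∀ t, t < j → G t = Fv t) ∧ (G j : ℕ) = a)).card := by
  classical
  have hmono : ∀ G ∈ ferrersBox k (n - k), ∀ i i' : Fin (n - k), i ≤ i' → G i' ≤ G i := by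
    intro G hG
    simpa [ferrersBox] using hG
  have hstep1 :
      ((ferrersBox k (n - k)).filter (fun G => (∑ i, (G i : ℕ)) = m ∧
        ∃ i, (∀ t, t < i → G t = Fv t) ∧ Fv i < G i))
      = Finset.univ.biUnion (fun j : Fin (n - k) =>
          (ferrersBox k (n - k)).filter (fun G => (∑ i, (G i : ℕ)) = m ∧
            (∀ t, t < j → G t = Fv t) ∧ Fv j < G j)) := by
    ext G
    simp only [Finset.mem_filter, Finset.mem_biUnion, Finset.mem_univ, true_and]
    tauto
  rw [hstep1, Finset.card_biUnion]
  · refine Finset.sum_congr rfl fun j _ => ?_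
    have hset :
        ((ferrersBox k (n - k)).filter (fun G => (∑ i, (G i : ℕ)) = m ∧
            (∀ t, t < j → G t = Fv t) ∧ Fv j < G j))
        = (Finset.Icc ((Fv j : ℕ) + 1)
            (if (j : ℕ) = 0 then k
             else (Fv ⟨(j : ℕ) - 1, Nat.lt_of_le_of_lt (Nat.sub_le _ _) j.isLt⟩ : ℕ))).biUnion
            (fun a => (ferrersBox k (n - k)).filter (fun G => (∑ i, (G i : ℕ)) = m ∧
              (∀ t, t < j → G t = Fv t) ∧ (G j : ℕ) = a)) := by
      ext G
      simp only [Finset.mem_filter, Finset.mem_biUnion, Finset.mem_Icc]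
      constructor
      · rintro ⟨hGB, hsum, hag, hlt⟩
        refine ⟨(G j : ℕ), ⟨Nat.succ_le_of_lt hlt, ?_⟩, hGB, hsum, hag, rfl⟩
        by_cases h0 : (j : ℕ) = 0
        · rw [if_pos h0]
          exact Nat.lt_succ_iff.mp (G j).isLt
        · rw [if_neg h0]
          set j' : Fin (n - k) := ⟨(j : ℕ) - 1, Nat.lt_of_le_of_lt (Nat.sub_le _ _) j.isLt⟩
          have hj' : j' < j := by
            show ((j : ℕ) - 1) < (j : ℕ)
            omega
          have h1 : G j ≤ G j' := hmono G hGB j' j (le_of_lt hj')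
          have h2 : G j' = Fv j' := hag j' hj'
          rw [h2] at h1
          exact h1
      · rintro ⟨a, ⟨ha1, _⟩, hGB, hsum, hag, hval⟩
        refine ⟨hGB, hsum, hag, ?_⟩
        show (Fv j : ℕ) < (G j : ℕ)
        omega
    rw [hset, Finset.card_biUnion]
    intro a _ b _ hab
    refine Finset.disjoint_left.mpr fun G hGa hGb => hab ?_
    simp only [Finset.mem_filter] at hGa hGb
    rw [← hGa.2.2.2, ← hGb.2.2.2]
  · intro j _ j' _ hjj'
    refine Finset.disjoint_left.mpr fun G hGa hGb => ?_
    simp only [Finset.mem_filter] at hGa hGb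
    rcases lt_or_gt_of_ne hjj' with h | h
    · exact absurd (hGb.2.2.1 j h) (by have := hGa.2.2.2; intro he; rw [he] at this; exact lt_irrefl _ this)
    · exact absurd (hGa.2.2.1 j' h) (by have := hGb.2.2.2; intro he; rw [he] at this; exact lt_irrefl _ this)
end

section
/- Let q be a prime power, 0 ≤ k ≤ n, and 1 ≤ j ≤ n. Fix a binary vector (u_j,...,u_1) and a list of column vectors (M_j,...,M_1) in F_q^k, and suppose there exists at least one k-dimensional subspace X of F_q^n whose extended representation EXT(X) has its rightmost j columns equal to ((u_j, M_j), ..., (u_1, M_1)). Then the number of k-dimensional subspaces of F_q^n with this property equals the Gaussian coefficient [n-j choose k-w]_q, where w = Σ_{i=1}^{j} u_i. -/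
/-- `A` (given by its rows `A i : Fin n → F`) is in reduced row echelon form with pivot
(leading-coefficient) columns `piv i`: the pivots strictly move to the right,
all entries of a row to the left of its pivot vanish, all leading coefficients are
ones, and each leading coefficient is the only nonzero entry in its column. -/
def IsRREFPiv {F : Type} [Field F] {k n : ℕ} (A : Fin k → Fin n → F)
    (piv : Fin k → Fin n) : Prop :=
  StrictMono piv ∧ (∀ i, A i (piv i) = 1) ∧ (∀ i j, j < piv i → A i j = 0) ∧
    (∀ i i', i' ≠ i → A i' (piv i) = 0)

/-- The Gaussian coefficient `[a choose b]_q`: the number of `b`-dimensional subspaces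
of `F^a` (for `F` a field with `q` elements). -/
noncomputable def gaussNum (F : Type) [Field F] (a b : ℕ) : ℕ :=
  Nat.card {X : Submodule F (Fin a → F) // Module.finrank F X = b}

/-- `X` is a `k`-dimensional subspace of `F^n` whose extended representation
(first row: identifying vector; last `k` rows: the RREF generator matrix) has its
rightmost `j` columns equal to `((u j, M j), …, (u 1, M 1))`, where column `i`
(1-based from the right, i.e. index `i : Fin j` stands for physical 0-based column
`n - 1 - i`) carries the identifying-vector bit `u i` and the column `M i` of the RREF. -/
def ExtPrefixProp {F : Type} [Field F] (n k j : ℕ) (hj1 : 1 ≤ j) (hjn : j ≤ n)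
    (u : Fin j → Fin 2) (M : Fin j → Fin k → F) (X : Submodule F (Fin n → F)) : Prop :=
  Module.finrank F X = k ∧
    ∃ (A : Fin k → Fin n → F) (piv : Fin k → Fin n), IsRREFPiv A piv ∧
      LinearIndependent F A ∧ Submodule.span F (Set.range A) = X ∧
      ∀ i : Fin j,
        (((u i : ℕ) = 1) ↔ ∃ r, (piv r : ℕ) = n - 1 - (i : ℕ)) ∧
        ∀ r : Fin k,
          A r ⟨n - 1 - (i : ℕ),
            Nat.lt_of_le_of_lt (Nat.sub_le _ _)
              (Nat.sub_lt (Nat.lt_of_lt_of_le i.pos hjn) Nat.one_pos)⟩ = M i r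

section RREF
open scoped Classical
variable {F : Type} [Field F] {k m : ℕ} {A : Fin k → Fin m → F} {piv : Fin k → Fin m}

lemma rref_pivot_delta (h : IsRREFPiv A piv) (r r' : Fin k) :
    A r (piv r') = if r = r' then 1 else 0 := by
  split
  · subst ‹r = r'›; exact h.2.1 r
  · exact h.2.2.2 r' r ‹r ≠ r'›

lemma rref_coords (h : IsRREFPiv A piv) {x : Fin m → F}
    (hx : x ∈ Submodule.span F (Set.range A)) :
    x = ∑ r, x (piv r) • A r := by
  obtain ⟨c, hc⟩ := (Submodule.mem_span_range_iff_exists_fun F).mp hx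
  have key : ∀ r', x (piv r') = c r' := by
    intro r'
    rw [← hc]
    simp only [Finset.sum_apply, Pi.smul_apply, smul_eq_mul]
    rw [Finset.sum_eq_single r']
    · rw [rref_pivot_delta h r' r', if_pos rfl]; ring
    · intro b _ hb; rw [rref_pivot_delta h b r', if_neg hb]; ring
    · simp
  calc x = ∑ i, c i • A i := hc.symm
  _ = ∑ r, x (piv r) • A r := Finset.sum_congr rfl (fun r _ => by rw [key r])

lemma rref_indep (h : IsRREFPiv A piv) : LinearIndependent F A := by
  rw [Fintype.linearIndependent_iff]
  intro c hc r
  have := congrFun hc (piv r)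
  simp only [Finset.sum_apply, Pi.smul_apply, smul_eq_mul, Pi.zero_apply] at this
  rw [Finset.sum_eq_single r] at this
  · rwa [rref_pivot_delta h r r, if_pos rfl, mul_one] at this
  · intro b _ hb; rw [rref_pivot_delta h b r, if_neg hb]; ring
  · simp

lemma rref_eq_zero (h : IsRREFPiv A piv) {x : Fin m → F}
    (hx : x ∈ Submodule.span F (Set.range A)) (hz : ∀ r, x (piv r) = 0) : x = 0 := by
  rw [rref_coords h hx]
  simp [hz]

/-- leading position of any vector in the span is a pivot -/
lemma rref_lead (h : IsRREFPiv A piv) {x : Fin m → F}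
    (hx : x ∈ Submodule.span F (Set.range A)) {p : Fin m} (hp : x p ≠ 0)
    (hlt : ∀ q, q < p → x q = 0) : ∃ r, piv r = p := by
  have hxne : x ≠ 0 := fun h0 => hp (by rw [h0]; rfl)
  have hne : ∃ r, x (piv r) ≠ 0 := by
    by_contra hcon
    push_neg at hcon
    exact hxne (rref_eq_zero h hx hcon)
  obtain ⟨r0, hr0, hmin⟩ := Finset.exists_min_image
    (Finset.univ.filter (fun r => x (piv r) ≠ 0)) (fun r => piv r)
    (by obtain ⟨r, hr⟩ := hne; exact ⟨r, Finset.mem_filter.mpr ⟨Finset.mem_univ r, hr⟩⟩)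
  rw [Finset.mem_filter] at hr0
  have hxr0 : x (piv r0) ≠ 0 := hr0.2
  -- x vanishes strictly below piv r0
  have hbelow : ∀ q, q < piv r0 → x q = 0 := by
    intro q hq
    have hx2 := rref_coords h hx
    have : x q = ∑ r, x (piv r) • A r q := by
      conv_lhs => rw [hx2]
      simp [Finset.sum_apply]
    rw [this]
    apply Finset.sum_eq_zero
    intro r _
    by_cases hr : x (piv r) = 0
    · rw [hr]; simp
    · have : piv r0 ≤ piv r := hmin r (Finset.mem_filter.mpr ⟨Finset.mem_univ r, hr⟩)
      have : q < piv r := lt_of_lt_of_le hq this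
      rw [h.2.2.1 r q this]; simp
  refine ⟨r0, ?_⟩
  rcases lt_trichotomy (piv r0) p with hlt' | heq | hgt
  · exact absurd (hlt _ hlt') hxr0
  · exact heq
  · exact absurd (hbelow _ hgt) hp

end RREF

section RREF2
variable {F : Type} [Field F] {k m : ℕ}

lemma rref_unique {A A' : Fin k → Fin m → F} {piv piv' : Fin k → Fin m}
    (h : IsRREFPiv A piv) (h' : IsRREFPiv A' piv')
    (hs : Submodule.span F (Set.range A) = Submodule.span F (Set.range A')) :
    piv = piv' ∧ A = A' := by
  have hmemA : ∀ r, A r ∈ Submodule.span F (Set.range A') := fun r =>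
    hs ▸ Submodule.subset_span (Set.mem_range_self r)
  have hmemA' : ∀ r, A' r ∈ Submodule.span F (Set.range A) := fun r =>
    hs ▸ Submodule.subset_span (Set.mem_range_self r)
  have hpiv : piv = piv' := by
    have inst : WellFoundedLT (Fin k) := inferInstance
    apply (@StrictMono.range_inj (Fin k) (Fin m) _ _ inst _ _ h.1 h'.1).mp
    apply Set.eq_of_subset_of_subset
    · rintro p ⟨r, rfl⟩
      exact rref_lead h' (hmemA r) (by rw [h.2.1 r]; exact one_ne_zero)
        (fun q hq => h.2.2.1 r q hq)
    · rintro p ⟨r, rfl⟩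
      exact Set.mem_range.mpr (rref_lead h (hmemA' r)
        (by rw [h'.2.1 r]; exact one_ne_zero) (fun q hq => h'.2.2.1 r q hq)) |>.imp
        (fun _ h => h)
  refine ⟨hpiv, funext fun r => ?_⟩
  have hsub : A r - A' r ∈ Submodule.span F (Set.range A') :=
    Submodule.sub_mem _ (hmemA r) (Submodule.subset_span (Set.mem_range_self r))
  have hz : A r - A' r = 0 := by
    apply rref_eq_zero h' hsub
    intro r'
    have h1 : A r (piv' r') = if r = r' then 1 else 0 := by
      rw [← hpiv]; exact rref_pivot_delta h r r'
    have h2 : A' r (piv' r') = if r = r' then 1 else 0 := rref_pivot_delta h' r r'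
    simp [Pi.sub_apply, h1, h2]
  have := sub_eq_zero.mp hz
  exact this

lemma rref_exists : ∀ (d : ℕ) (Y : Submodule F (Fin m → F)), Module.finrank F Y = d →
    ∃ (B : Fin d → Fin m → F) (pivB : Fin d → Fin m),
      IsRREFPiv B pivB ∧ Submodule.span F (Set.range B) = Y := by
  intro d
  induction d with
  | zero =>
    intro Y hY
    have hbot : Y = ⊥ := Submodule.finrank_eq_zero.mp hY
    refine ⟨Fin.elim0, Fin.elim0,
      ⟨fun a => a.elim0, fun a => a.elim0, fun a => a.elim0, fun a => a.elim0⟩, ?_⟩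
    rw [hbot]
    simp [Set.range_eq_empty]
  | succ d ih =>
    intro Y hY
    classical
    have hYne : Y ≠ ⊥ := by
      intro hbot; rw [hbot, finrank_bot] at hY; exact Nat.succ_ne_zero d hY.symm
    obtain ⟨y0, hy0Y, hy0ne⟩ := Submodule.exists_mem_ne_zero_of_ne_bot hYne
    have hPex : ∃ p : ℕ, ∃ h : p < m, ∃ x ∈ Y, x ⟨p, h⟩ ≠ 0 := by
      have : ∃ q : Fin m, y0 q ≠ 0 := by
        by_contra hc; push_neg at hc; exact hy0ne (funext hc)
      obtain ⟨q, hq⟩ := this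
      exact ⟨q, q.isLt, y0, hy0Y, by simpa using hq⟩
    set ℓn := Nat.find hPex with hℓn
    obtain ⟨hℓm, x0, hx0Y, hx0ne⟩ := Nat.find_spec hPex
    set ℓ : Fin m := ⟨ℓn, hℓm⟩ with hℓ
    have hvanish : ∀ x ∈ Y, ∀ q : Fin m, (q : ℕ) < ℓn → x q = 0 := by
      intro x hxY q hq
      by_contra hc
      exact Nat.find_min hPex hq ⟨q.isLt, x, hxY, by simpa using hc⟩
    set x1 : Fin m → F := (x0 ℓ)⁻¹ • x0 with hx1
    have hx1Y : x1 ∈ Y := Y.smul_mem _ hx0Y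
    have hx1ℓ : x1 ℓ = 1 := by
      simp only [hx1, Pi.smul_apply, smul_eq_mul]
      exact inv_mul_cancel₀ hx0ne
    -- the kernel subspace
    set φ : Y →ₗ[F] F := (LinearMap.proj ℓ).comp Y.subtype with hφ
    have hφsurj : LinearMap.range φ = ⊤ := by
      rw [Submodule.eq_top_iff']
      intro c
      exact ⟨c • ⟨x1, hx1Y⟩, by simp [hφ, hx1ℓ]⟩
    have hkerrank : Module.finrank F (LinearMap.ker φ) = d := by
      have h1 := LinearMap.finrank_range_add_finrank_ker φ
      rw [hφsurj, finrank_top, hY] at h1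
      have : Module.finrank F F = 1 := Module.finrank_self F
      omega
    set Y' : Submodule F (Fin m → F) := Submodule.map Y.subtype (LinearMap.ker φ) with hY'
    have hY'le : Y' ≤ Y := by
      rw [hY']
      rintro x ⟨⟨y, hyY⟩, _, rfl⟩
      exact hyY
    have hY'mem : ∀ x, x ∈ Y' ↔ (x ∈ Y ∧ x ℓ = 0) := by
      intro x
      constructor
      · rintro ⟨⟨y, hyY⟩, hk, rfl⟩
        refine ⟨hyY, ?_⟩
        simpa [hφ] using hk
      · rintro ⟨hxY, hxℓ⟩
        exact ⟨⟨x, hxY⟩, by simpa [hφ, LinearMap.mem_ker] using hxℓ, rfl⟩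
    have hY'rank : Module.finrank F Y' = d := by
      rw [hY', Submodule.finrank_map_subtype_eq]; exact hkerrank
    obtain ⟨B', piv', hB', hspan'⟩ := ih Y' hY'rank
    have hB'mem : ∀ r, B' r ∈ Y' := fun r =>
      hspan' ▸ Submodule.subset_span (Set.mem_range_self r)
    have hpivgt : ∀ r, ℓ < piv' r := by
      intro r
      rcases lt_trichotomy (piv' r) ℓ with hlt | heq | hgt
      · exfalso
        have := hvanish (B' r) (hY'le (hB'mem r)) (piv' r) hlt
        rw [hB'.2.1 r] at this
        exact one_ne_zero this
      · exfalso
        have := ((hY'mem (B' r)).mp (hB'mem r)).2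
        rw [← heq, hB'.2.1 r] at this
        exact one_ne_zero this
      · exact hgt
    set x2 : Fin m → F := x1 - ∑ r, x1 (piv' r) • B' r with hx2
    have hx2Y : x2 ∈ Y := by
      apply Y.sub_mem hx1Y
      exact Submodule.sum_mem _ (fun r _ => Y.smul_mem _ (hY'le (hB'mem r)))
    have hB'ℓ : ∀ r, B' r ℓ = 0 := fun r => ((hY'mem (B' r)).mp (hB'mem r)).2
    have hx2ℓ : x2 ℓ = 1 := by
      simp only [hx2, Pi.sub_apply, Finset.sum_apply, Pi.smul_apply, smul_eq_mul, hx1ℓ]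
      rw [Finset.sum_eq_zero (fun r _ => by rw [hB'ℓ r, mul_zero])]
      ring
    have hx2piv : ∀ r, x2 (piv' r) = 0 := by
      intro r
      simp only [hx2, Pi.sub_apply, Finset.sum_apply, Pi.smul_apply, smul_eq_mul]
      rw [Finset.sum_eq_single r]
      · rw [rref_pivot_delta hB' r r, if_pos rfl]; ring
      · intro b _ hb; rw [rref_pivot_delta hB' b r, if_neg hb]; ring
      · simp
    have hx2lt : ∀ q : Fin m, q < ℓ → x2 q = 0 := by
      intro q hq
      simp only [hx2, Pi.sub_apply, Finset.sum_apply, Pi.smul_apply, smul_eq_mul]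
      rw [hvanish x1 hx1Y q hq]
      rw [Finset.sum_eq_zero (fun r _ => by
        rw [hB'.2.2.1 r q (lt_trans hq (hpivgt r)), mul_zero])]
      ring
    refine ⟨Fin.cons x2 B', Fin.cons ℓ piv', ⟨?_, ?_, ?_, ?_⟩, ?_⟩
    · -- strictmono
      intro a b hab
      induction a using Fin.cases with
      | zero =>
        induction b using Fin.cases with
        | zero => exact absurd hab (lt_irrefl _)
        | succ t => simpa using hpivgt t
      | succ s =>
        induction b using Fin.cases with
        | zero => exact absurd hab (by simp [Fin.lt_def])
        | succ t =>
          simp only [Fin.cons_succ]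
          exact hB'.1 (by simpa [Fin.succ_lt_succ_iff] using hab)
    · intro i
      induction i using Fin.cases with
      | zero => simpa using hx2ℓ
      | succ s => simpa using hB'.2.1 s
    · intro i q hq
      induction i using Fin.cases with
      | zero => exact hx2lt q (by simpa using hq)
      | succ s => exact hB'.2.2.1 s q (by simpa using hq)
    · intro i i' hne
      induction i using Fin.cases with
      | zero =>
        induction i' using Fin.cases with
        | zero => exact absurd rfl hne
        | succ t => simpa using hB'ℓ t
      | succ s =>
        induction i' using Fin.cases with
        | zero => simpa using hx2piv s
        | succ t =>
          simp only [Fin.cons_succ]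
          exact hB'.2.2.2 s t (fun h => hne (by rw [h]))
    · -- span
      rw [Fin.range_cons]
      apply le_antisymm
      · rw [Submodule.span_le]
        rintro x (rfl | ⟨r, rfl⟩)
        · exact hx2Y
        · exact hY'le (hB'mem _)
      · intro y hy
        have hyz : y - y ℓ • x2 ∈ Y' := by
          rw [hY'mem]
          constructor
          · exact Y.sub_mem hy (Y.smul_mem _ hx2Y)
          · simp [hx2ℓ]
        have h1 : y - y ℓ • x2 ∈ Submodule.span F (insert x2 (Set.range B')) := by
          rw [← hspan'] at hyz
          exact Submodule.span_mono (Set.subset_insert _ _) hyz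
        have h2 : y ℓ • x2 ∈ Submodule.span F (insert x2 (Set.range B')) :=
          Submodule.smul_mem _ _ (Submodule.subset_span (Set.mem_insert _ _))
        have := Submodule.add_mem _ h1 h2
        simpa using this

end RREF2

section Count
open Finset

/-- an "upper" subset of `Fin k` of card `w` is exactly `{r | k - w ≤ r}` -/
lemma upper_set_char {k w : ℕ} (S : Finset (Fin k))
    (hup : ∀ r r' : Fin k, r ≤ r' → r ∈ S → r' ∈ S) (hcard : S.card = w) :
    ∀ r : Fin k, r ∈ S ↔ k - w ≤ (r : ℕ) := by
  have hwk : w ≤ k := hcard ▸ (card_le_card (subset_univ S)).trans (by simp)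
  intro r
  constructor
  · intro hr
    have hsub : Finset.Ici r ⊆ S := fun r' hr' => hup r r' (mem_Ici.mp hr') hr
    have := card_le_card hsub
    rw [Fin.card_Ici, hcard] at this
    omega
  · intro hge
    by_contra hr
    have hsub : S ⊆ Finset.Ioi r := by
      intro r' hr'
      rw [mem_Ioi]
      by_contra hle
      push_neg at hle
      exact hr (hup r' r hle hr')
    have := card_le_card hsub
    rw [Fin.card_Ioi, hcard] at this
    have hk := r.isLt
    omega

lemma sum_fin2_eq_card {j : ℕ} (u : Fin j → Fin 2) :
    ∑ i, (u i : ℕ) = (univ.filter (fun i => u i = 1)).card := by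
  rw [card_filter]
  apply Finset.sum_congr rfl
  intro i _
  have := (u i).isLt
  by_cases h : u i = 1
  · rw [if_pos h, h]; rfl
  · rw [if_neg h]
    have : (u i : ℕ) ≠ 1 := fun hc => h (Fin.ext hc)
    omega

end Count

section Late
open Finset

lemma late_count {n k j : ℕ} (hj1 : 1 ≤ j) (hjn : j ≤ n) (u : Fin j → Fin 2)
    (piv : Fin k → Fin n) (hinj : Function.Injective piv)
    (hu : ∀ i : Fin j, ((u i : ℕ) = 1) ↔ ∃ r, (piv r : ℕ) = n - 1 - (i : ℕ)) :
    (Finset.univ.filter (fun r => n - j ≤ (piv r : ℕ))).card = ∑ i, (u i : ℕ) := by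
  classical
  rw [sum_fin2_eq_card u]
  apply Finset.card_bij (fun r hr => (⟨n - 1 - (piv r : ℕ), by
    have h1 := (piv r).isLt
    have h2 := (Finset.mem_filter.mp hr).2
    omega⟩ : Fin j))
  · intro r hr
    rw [mem_filter] at hr
    have hlt := (piv r).isLt
    rw [mem_filter]
    refine ⟨mem_univ _, ?_⟩
    have : ((u ⟨n - 1 - (piv r : ℕ), by omega⟩ : Fin 2) : ℕ) = 1 := by
      rw [hu]
      exact ⟨r, by simp; omega⟩
    exact Fin.ext this
  · intro r hr r' hr' heq
    rw [mem_filter] at hr hr'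
    have h1 := (piv r).isLt
    have h2 := (piv r').isLt
    have : n - 1 - (piv r : ℕ) = n - 1 - (piv r' : ℕ) := congrArg Fin.val heq
    exact hinj (Fin.ext (by omega))
  · intro i hi
    rw [mem_filter] at hi
    have hiv : ((u i : Fin 2) : ℕ) = 1 := by rw [hi.2]; rfl
    obtain ⟨r, hr⟩ := (hu i).mp hiv
    have hilt := i.isLt
    refine ⟨r, mem_filter.mpr ⟨mem_univ _, by omega⟩, ?_⟩
    apply Fin.ext
    simp only
    omega

end Late

section Restrict
variable {F : Type} [Field F]

lemma restrict_spec {n k m d : ℕ} (hmn : m ≤ n) (hdk : d ≤ k)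
    (A : Fin k → Fin n → F) (piv : Fin k → Fin n) (h : IsRREFPiv A piv)
    (hlate : ∀ r : Fin k, m ≤ (piv r : ℕ) ↔ d ≤ (r : ℕ)) :
    IsRREFPiv (fun (s : Fin d) (p : Fin m) => A (Fin.castLE hdk s) (Fin.castLE hmn p))
      (fun s => (⟨(piv (Fin.castLE hdk s) : ℕ), by
        have h1 : ((Fin.castLE hdk s : Fin k) : ℕ) < d := s.isLt
        have h2 := (hlate (Fin.castLE hdk s)).mp
        have h3 := (piv (Fin.castLE hdk s)).isLt
        omega⟩ : Fin m)) ∧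
    Submodule.span F (Set.range (fun (s : Fin d) (p : Fin m) =>
        A (Fin.castLE hdk s) (Fin.castLE hmn p)))
      = Submodule.map (LinearMap.funLeft F F (Fin.castLE hmn))
          (Submodule.span F (Set.range A)) := by
  constructor
  · refine ⟨?_, ?_, ?_, ?_⟩
    · intro a b hab
      have h1 : Fin.castLE hdk a < Fin.castLE hdk b := by
        rw [Fin.lt_def] at hab ⊢
        exact hab
      have h2 := h.1 h1
      rw [Fin.lt_def] at h2 ⊢
      exact h2
    · intro i
      exact h.2.1 (Fin.castLE hdk i)
    · intro i q hq
      apply h.2.2.1 (Fin.castLE hdk i)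
      rw [Fin.lt_def] at hq ⊢
      exact hq
    · intro i i' hne
      have hne' : Fin.castLE hdk i' ≠ Fin.castLE hdk i := by
        intro hcon
        apply hne
        apply Fin.ext
        have h5 := congrArg Fin.val hcon
        exact h5
      exact h.2.2.2 (Fin.castLE hdk i) (Fin.castLE hdk i') hne'
  · rw [Submodule.map_span, ← Set.range_comp]
    apply le_antisymm
    · rw [Submodule.span_le]
      rintro x ⟨s, rfl⟩
      apply Submodule.subset_span
      exact ⟨Fin.castLE hdk s, rfl⟩
    · rw [Submodule.span_le]
      rintro x ⟨r, rfl⟩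
      by_cases hr : (r : ℕ) < d
      · apply Submodule.subset_span
        exact ⟨⟨(r : ℕ), hr⟩, rfl⟩
      · have hz : (LinearMap.funLeft F F (Fin.castLE hmn) ∘ A) r = 0 := by
          funext p
          simp only [Function.comp_apply, LinearMap.funLeft_apply, Pi.zero_apply]
          apply h.2.2.1 r
          have hm : m ≤ (piv r : ℕ) := (hlate r).mpr (by omega)
          have : ((Fin.castLE hmn p : Fin n) : ℕ) = (p : ℕ) := rfl
          simp only [Fin.lt_def, this]
          have := p.isLt
          omega
        rw [hz]
        exact Submodule.zero_mem _

end Restrict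

set_option maxHeartbeats 2000000

/-- **Counting subspaces with a prescribed prefix of the extended representation.**
Let `q` be a prime power, `F` a field with `q` elements, `0 ≤ k ≤ n`, `1 ≤ j ≤ n`.
Fix the bits `u` and columns `M` of the rightmost `j` columns of an extended
representation, and suppose at least one `k`-dimensional subspace realizes them.
Then the number of `k`-dimensional subspaces of `F^n` realizing them equals the
Gaussian coefficient `[n-j choose k-w]_q`, where `w = ∑ u i`. -/
theorem stmt_11 (q n k j : ℕ) (hq : IsPrimePow q) (F : Type) [Field F] [Fintype F]
    (hF : Fintype.card F = q) (hkn : k ≤ n) (hj1 : 1 ≤ j) (hjn : j ≤ n)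
    (u : Fin j → Fin 2) (M : Fin j → Fin k → F)
    (hex : ∃ X : Submodule F (Fin n → F), ExtPrefixProp n k j hj1 hjn u M X) :
    Nat.card {X : Submodule F (Fin n → F) // ExtPrefixProp n k j hj1 hjn u M X} =
      gaussNum F (n - j) (k - ∑ i, (u i : ℕ)) := by
  classical
  obtain ⟨X0, hX0⟩ := hex
  set m := n - j with hm
  set w := ∑ i, (u i : ℕ) with hw
  set d := k - w with hd
  have hmn : m ≤ n := Nat.sub_le n j
  have hdk : d ≤ k := Nat.sub_le k w
  set π : (Fin n → F) →ₗ[F] (Fin m → F) := LinearMap.funLeft F F (Fin.castLE hmn) with hπ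
  -- late-pivot characterization, for any witness of the property
  have hlateGen : ∀ (A : Fin k → Fin n → F) (piv : Fin k → Fin n), IsRREFPiv A piv →
      (∀ i : Fin j, ((u i : ℕ) = 1) ↔ ∃ r, (piv r : ℕ) = n - 1 - (i : ℕ)) →
      ∀ r : Fin k, m ≤ (piv r : ℕ) ↔ d ≤ (r : ℕ) := by
    intro A piv hA hu
    have hcard : (Finset.univ.filter (fun r => n - j ≤ (piv r : ℕ))).card = w :=
      late_count hj1 hjn u piv hA.1.injective hu
    have hup : ∀ r r' : Fin k, r ≤ r' →
        r ∈ Finset.univ.filter (fun r => n - j ≤ (piv r : ℕ)) →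
        r' ∈ Finset.univ.filter (fun r => n - j ≤ (piv r : ℕ)) := by
      intro r r' hle hr
      rw [Finset.mem_filter] at hr ⊢
      refine ⟨Finset.mem_univ _, ?_⟩
      have h1 : piv r ≤ piv r' := hA.1.monotone hle
      have h2 : (piv r : ℕ) ≤ (piv r' : ℕ) := h1
      have := hr.2
      omega
    have hchar := upper_set_char _ hup hcard
    intro r
    have h2 := hchar r
    rw [Finset.mem_filter] at h2
    constructor
    · intro hge
      have := h2.mp ⟨Finset.mem_univ _, by omega⟩
      omega
    · intro hge
      have := (h2.mpr (by omega)).2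
      omega
  -- forward map : finrank of projection
  have key : ∀ X : Submodule F (Fin n → F), ExtPrefixProp n k j hj1 hjn u M X →
      Module.finrank F (Submodule.map π X) = d := by
    intro X hX
    obtain ⟨hrk, A, piv, hA, hind, hspan, hpre⟩ := hX
    have hlate := hlateGen A piv hA (fun i => (hpre i).1)
    obtain ⟨hB, hBspan⟩ := restrict_spec hmn hdk A piv hA hlate
    rw [← hspan, hπ, ← hBspan, finrank_span_eq_card (rref_indep hB), Fintype.card_fin]
  -- injectivity
  have hinj : ∀ X X' : Submodule F (Fin n → F), ExtPrefixProp n k j hj1 hjn u M X →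
      ExtPrefixProp n k j hj1 hjn u M X' →
      Submodule.map π X = Submodule.map π X' → X = X' := by
    intro X X' hX hX' hmap
    obtain ⟨hrk, A, piv, hA, hind, hspan, hpre⟩ := hX
    obtain ⟨hrk', A', piv', hA', hind', hspan', hpre'⟩ := hX'
    have hlate := hlateGen A piv hA (fun i => (hpre i).1)
    have hlate' := hlateGen A' piv' hA' (fun i => (hpre' i).1)
    obtain ⟨hB, hBspan⟩ := restrict_spec hmn hdk A piv hA hlate
    obtain ⟨hB', hBspan'⟩ := restrict_spec hmn hdk A' piv' hA' hlate'
    have hspanEq : Submodule.span F (Set.range (fun (s : Fin d) (p : Fin m) =>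
          A (Fin.castLE hdk s) (Fin.castLE hmn p)))
        = Submodule.span F (Set.range (fun (s : Fin d) (p : Fin m) =>
          A' (Fin.castLE hdk s) (Fin.castLE hmn p))) := by
      rw [hBspan, hBspan', hspan, hspan']
      exact hmap
    obtain ⟨hpivBeq, hBeq⟩ := rref_unique hB hB' hspanEq
    have hpiveq : piv = piv' := by
      have inst : WellFoundedLT (Fin k) := inferInstance
      apply (@StrictMono.range_inj (Fin k) (Fin n) _ _ inst _ _ hA.1 hA'.1).mp
      apply Set.eq_of_subset_of_subset
      · rintro p ⟨r, rfl⟩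
        by_cases hr : (r : ℕ) < d
        · have h2 := congrArg Fin.val (congrFun hpivBeq ⟨(r : ℕ), hr⟩)
          exact ⟨r, Fin.ext h2.symm⟩
        · have hge : m ≤ (piv r : ℕ) := (hlate r).mpr (by omega)
          have hlt := (piv r).isLt
          have hui : ((u ⟨n - 1 - (piv r : ℕ), by omega⟩ : Fin 2) : ℕ) = 1 :=
            (hpre ⟨n - 1 - (piv r : ℕ), by omega⟩).1.mpr ⟨r, by simp only; omega⟩
          obtain ⟨r', hr'⟩ := (hpre' ⟨n - 1 - (piv r : ℕ), by omega⟩).1.mp hui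
          simp only at hr'
          exact ⟨r', Fin.ext (by omega)⟩
      · rintro p ⟨r, rfl⟩
        by_cases hr : (r : ℕ) < d
        · have h2 := congrArg Fin.val (congrFun hpivBeq ⟨(r : ℕ), hr⟩)
          exact ⟨r, Fin.ext h2⟩
        · have hge : m ≤ (piv' r : ℕ) := (hlate' r).mpr (by omega)
          have hlt := (piv' r).isLt
          have hui : ((u ⟨n - 1 - (piv' r : ℕ), by omega⟩ : Fin 2) : ℕ) = 1 :=
            (hpre' ⟨n - 1 - (piv' r : ℕ), by omega⟩).1.mpr ⟨r, by simp only; omega⟩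
          obtain ⟨r', hr'⟩ := (hpre ⟨n - 1 - (piv' r : ℕ), by omega⟩).1.mp hui
          simp only at hr'
          exact ⟨r', Fin.ext (by omega)⟩
    have hAeq : A = A' := by
      funext r p
      by_cases hp : (p : ℕ) < m
      · by_cases hr : (r : ℕ) < d
        · exact congrFun (congrFun hBeq ⟨(r : ℕ), hr⟩) ⟨(p : ℕ), hp⟩
        · have hge : m ≤ (piv r : ℕ) := (hlate r).mpr (by omega)
          have hge' : m ≤ (piv' r : ℕ) := (hlate' r).mpr (by omega)
          rw [hA.2.2.1 r p (by rw [Fin.lt_def]; omega),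
            hA'.2.2.1 r p (by rw [Fin.lt_def]; omega)]
      · have hplt := p.isLt
        set i0 : Fin j := ⟨n - 1 - (p : ℕ), by omega⟩ with hi0
        have hival : (i0 : ℕ) = n - 1 - (p : ℕ) := rfl
        have hcol : p = (⟨n - 1 - (i0 : ℕ),
            Nat.lt_of_le_of_lt (Nat.sub_le _ _)
              (Nat.sub_lt (Nat.lt_of_lt_of_le i0.pos hjn) Nat.one_pos)⟩ : Fin n) :=
          Fin.ext (by simp only [Fin.val_mk, hival]; omega)
        rw [hcol, (hpre i0).2 r, (hpre' i0).2 r]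
    rw [← hspan, ← hspan', hAeq]
  -- surjectivity
  obtain ⟨hrk0, A0, piv0, hA0, hind0, hspan0, hpre0⟩ := hX0
  have hlate0 := hlateGen A0 piv0 hA0 (fun i => (hpre0 i).1)
  have hsurj : ∀ Y : Submodule F (Fin m → F), Module.finrank F Y = d →
      ∃ X, ExtPrefixProp n k j hj1 hjn u M X ∧ Submodule.map π X = Y := by
    intro Y hY
    obtain ⟨B, pivB, hB, hBspan⟩ := rref_exists d Y hY
    set A : Fin k → Fin n → F := fun r p =>
      if hp : (p : ℕ) < m then (if hr : (r : ℕ) < d then B ⟨r, hr⟩ ⟨p, hp⟩ else 0)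
      else A0 r p with hAdef
    set piv : Fin k → Fin n := fun r =>
      if hr : (r : ℕ) < d then Fin.castLE hmn (pivB ⟨r, hr⟩) else piv0 r with hpivdef
    have hpivval1 : ∀ (r : Fin k) (hr : (r : ℕ) < d),
        (piv r : ℕ) = (pivB ⟨(r : ℕ), hr⟩ : ℕ) := by
      intro r hr
      rw [hpivdef]
      simp only [dif_pos hr]
      rfl
    have hpivval2 : ∀ (r : Fin k), ¬ (r : ℕ) < d → piv r = piv0 r := by
      intro r hr
      rw [hpivdef]
      simp only [dif_neg hr]
    have hAval1 : ∀ (r : Fin k) (p : Fin n) (hp : (p : ℕ) < m) (hr : (r : ℕ) < d),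
        A r p = B ⟨(r : ℕ), hr⟩ ⟨(p : ℕ), hp⟩ := by
      intro r p hp hr
      rw [hAdef]
      simp only [dif_pos hp, dif_pos hr]
    have hAval2 : ∀ (r : Fin k) (p : Fin n), (p : ℕ) < m → ¬ (r : ℕ) < d →
        A r p = 0 := by
      intro r p hp hr
      rw [hAdef]
      simp only [dif_pos hp, dif_neg hr]
    have hAval3 : ∀ (r : Fin k) (p : Fin n), ¬ (p : ℕ) < m → A r p = A0 r p := by
      intro r p hp
      rw [hAdef]
      simp only [dif_neg hp]
    have hArref : IsRREFPiv A piv := by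
      refine ⟨?_, ?_, ?_, ?_⟩
      · -- strictMono
        intro a b hab
        rw [Fin.lt_def] at hab
        rw [Fin.lt_def]
        by_cases ha : (a : ℕ) < d
        · by_cases hb : (b : ℕ) < d
          · rw [hpivval1 a ha, hpivval1 b hb]
            have := hB.1 (show (⟨(a : ℕ), ha⟩ : Fin d) < ⟨(b : ℕ), hb⟩ by
              rw [Fin.lt_def]; exact hab)
            rw [Fin.lt_def] at this
            exact this
          · rw [hpivval1 a ha, hpivval2 b hb]
            have h1 := (pivB ⟨(a : ℕ), ha⟩).isLt
            have h2 : m ≤ (piv0 b : ℕ) := (hlate0 b).mpr (by omega)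
            omega
        · by_cases hb : (b : ℕ) < d
          · omega
          · rw [hpivval2 a ha, hpivval2 b hb]
            have := hA0.1 (show a < b by rw [Fin.lt_def]; exact hab)
            rw [Fin.lt_def] at this
            exact this
      · -- ones
        intro i
        by_cases hi : (i : ℕ) < d
        · have hpv := hpivval1 i hi
          have hplt : ((piv i : Fin n) : ℕ) < m := by
            rw [hpv]; exact (pivB ⟨(i : ℕ), hi⟩).isLt
          rw [hAval1 i (piv i) hplt hi]
          have : (⟨((piv i : Fin n) : ℕ), hplt⟩ : Fin m) = pivB ⟨(i : ℕ), hi⟩ :=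
            Fin.ext hpv
          rw [this]
          exact hB.2.1 ⟨(i : ℕ), hi⟩
        · have hpv := hpivval2 i hi
          have hge : m ≤ (piv0 i : ℕ) := (hlate0 i).mpr (by omega)
          rw [hpv, hAval3 i (piv0 i) (by omega)]
          exact hA0.2.1 i
      · -- zeros left of pivot
        intro i p hp
        rw [Fin.lt_def] at hp
        by_cases hi : (i : ℕ) < d
        · have hpv := hpivval1 i hi
          have hplt : (p : ℕ) < m := by
            have := (pivB ⟨(i : ℕ), hi⟩).isLt
            omega
          rw [hAval1 i p hplt hi]
          apply hB.2.2.1 ⟨(i : ℕ), hi⟩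
          rw [Fin.lt_def]
          simp only [Fin.val_mk]
          omega
        · have hpv := hpivval2 i hi
          by_cases hplt : (p : ℕ) < m
          · exact hAval2 i p hplt hi
          · rw [hAval3 i p hplt]
            apply hA0.2.2.1 i
            rw [Fin.lt_def]
            rw [hpv] at hp
            exact hp
      · -- pivot columns
        intro i i' hne
        by_cases hi : (i : ℕ) < d
        · have hpv := hpivval1 i hi
          have hplt : ((piv i : Fin n) : ℕ) < m := by
            rw [hpv]; exact (pivB ⟨(i : ℕ), hi⟩).isLt
          by_cases hi' : (i' : ℕ) < d
          · rw [hAval1 i' (piv i) hplt hi']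
            have heq : (⟨((piv i : Fin n) : ℕ), hplt⟩ : Fin m) = pivB ⟨(i : ℕ), hi⟩ :=
              Fin.ext hpv
            rw [heq]
            apply hB.2.2.2 ⟨(i : ℕ), hi⟩ ⟨(i' : ℕ), hi'⟩
            intro hcon
            apply hne
            apply Fin.ext
            have := congrArg Fin.val hcon
            exact this
          · exact hAval2 i' (piv i) hplt hi'
        · have hpv := hpivval2 i hi
          have hge : m ≤ (piv0 i : ℕ) := (hlate0 i).mpr (by omega)
          rw [hpv, hAval3 i' (piv0 i) (by omega)]
          exact hA0.2.2.2 i i' hne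
    -- the subspace
    have hlateA : ∀ r : Fin k, m ≤ (piv r : ℕ) ↔ d ≤ (r : ℕ) := by
      intro r
      by_cases hr : (r : ℕ) < d
      · have := hpivval1 r hr
        have := (pivB ⟨(r : ℕ), hr⟩).isLt
        constructor
        · intro h; omega
        · intro h; omega
      · have := hpivval2 r hr
        have hge : m ≤ (piv0 r : ℕ) := (hlate0 r).mpr (by omega)
        constructor
        · intro _; omega
        · intro _; rw [this]; exact hge
    set X : Submodule F (Fin n → F) := Submodule.span F (Set.range A) with hX
    have hprefix : ∀ i : Fin j,
        (((u i : ℕ) = 1) ↔ ∃ r, (piv r : ℕ) = n - 1 - (i : ℕ)) ∧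
        ∀ r : Fin k,
          A r ⟨n - 1 - (i : ℕ),
            Nat.lt_of_le_of_lt (Nat.sub_le _ _)
              (Nat.sub_lt (Nat.lt_of_lt_of_le i.pos hjn) Nat.one_pos)⟩ = M i r := by
      intro i
      have hilt := i.isLt
      have hcolge : ¬ (n - 1 - (i : ℕ) < m) := by omega
      constructor
      · constructor
        · intro hui
          obtain ⟨r, hr⟩ := (hpre0 i).1.mp hui
          have hrge : ¬ (r : ℕ) < d := by
            have h2 := (hlate0 r).mp (by omega)
            omega
          exact ⟨r, by rw [hpivval2 r hrge]; exact hr⟩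
        · rintro ⟨r, hr⟩
          by_cases hrd : (r : ℕ) < d
          · exfalso
            have := hpivval1 r hrd
            have := (pivB ⟨(r : ℕ), hrd⟩).isLt
            omega
          · rw [hpivval2 r hrd] at hr
            exact (hpre0 i).1.mpr ⟨r, hr⟩
      · intro r
        rw [hAval3 r _ hcolge]
        exact (hpre0 i).2 r
    have hfin : Module.finrank F X = k := by
      have h1 := finrank_span_eq_card (R := F) (rref_indep hArref)
      rw [Fintype.card_fin] at h1
      exact h1
    -- the projection of X is Y
    have hrestrict : (fun (s : Fin d) (p : Fin m) =>
        A (Fin.castLE hdk s) (Fin.castLE hmn p)) = B := by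
      funext s p
      rw [hAval1 (Fin.castLE hdk s) (Fin.castLE hmn p) p.isLt s.isLt]
      rfl
    obtain ⟨_, hBspan2⟩ := restrict_spec hmn hdk A piv hArref hlateA
    rw [hrestrict, hBspan] at hBspan2
    refine ⟨X, ⟨hfin, A, piv, hArref, rref_indep hArref, rfl, hprefix⟩, ?_⟩
    rw [hX, hπ]
    exact hBspan2.symm
  -- assemble
  let Φ : {X : Submodule F (Fin n → F) // ExtPrefixProp n k j hj1 hjn u M X} →
      {Y : Submodule F (Fin m → F) // Module.finrank F Y = d} :=
    fun X => ⟨Submodule.map π X.1, key X.1 X.2⟩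
  have hbij : Function.Bijective Φ := by
    constructor
    · intro X X' h
      apply Subtype.ext
      exact hinj X.1 X'.1 X.2 X'.2 (congrArg Subtype.val h)
    · intro Y
      obtain ⟨X, hXp, hXm⟩ := hsurj Y.1 Y.2
      exact ⟨⟨X, hXp⟩, Subtype.ext hXm⟩
  have hcard := Nat.card_eq_of_bijective Φ hbij
  rw [hcard]
  rfl
end

section
/- Let q be a prime power and 0 ≤ k ≤ n. Let X be a k-dimensional subspace of F_q^n with extended representation EXT(X) having columns (v_n, X_n), ..., (v_2, X_2), (v_1, X_1) from left to right, where v_j ∈ {0,1} and X_j ∈ F_q^k. Then the number of k-dimensional subspaces Y of F_q^n with Y < X in the extended-representation lexicographic order equals Σ_{j=1}^{n} ( v_j · q^{k - w_{j-1}} + (1 - v_j) · {X_j} / q^{w_{j-1}} ) · [n-j choose k - w_{j-1}]_q, where w_{j-1} = Σ_{ℓ=1}^{j-1} v_ℓ and {X_j} is the integer whose base-q representation is the column vector X_j (read with the entry in row 1 as the most significant digit). -/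
/-- `A` is the (unique) RREF generator matrix of `X` with pivot columns `piv`:
it is in RREF and its rows form a basis of `X`. -/
def GeneratesRREF {F : Type} [Field F] {k n : ℕ} (A : Fin k → Fin n → F)
    (piv : Fin k → Fin n) (X : Submodule F (Fin n → F)) : Prop :=
  IsRREFPiv A piv ∧ LinearIndependent F A ∧ Submodule.span F (Set.range A) = X

/-- The bit `v_{j+1}` of the identifying vector at the column with index `j`
(0-based from the right; `j.rev` is the corresponding physical 0-based position
`n - 1 - j` from the left), as a natural number. -/
def pivInd {n k : ℕ} (piv : Fin k → Fin n) (j : Fin n) : ℕ :=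
  if ∃ r, piv r = j.rev then 1 else 0

/-- `w_j`: the weight of the rightmost `j` entries of the identifying vector,
i.e. the number of pivots among the columns strictly to the right of column `j`
(0-based from the right). -/
def wPrefix {n k : ℕ} (piv : Fin k → Fin n) (j : Fin n) : ℕ :=
  ∑ ℓ ∈ Finset.univ.filter (fun ℓ : Fin n => ℓ < j), pivInd piv ℓ

/-- The integer value of the column of the extended representation with index `j`
(0-based from the right), whose base-`q` digits are the identifying-vector bit
(most significant) followed by the entries of the RREF column (row `0` most
significant), elements of `F` being identified with `{0,…,q-1}` via `e`. -/
def extColVal (q : ℕ) {F : Type} [Field F] (e : F ≃ Fin q) {n k : ℕ}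
    (A : Fin k → Fin n → F) (piv : Fin k → Fin n) (j : Fin n) : ℕ :=
  pivInd piv j * q ^ k + ∑ r : Fin k, (e (A r j.rev) : ℕ) * q ^ (k - 1 - (r : ℕ))

/-- `X < Y` in the extended-representation lexicographic order: at the least column
index `t` (columns indexed from the right, the rightmost column being compared
first) where the extended representations differ, the integer value of the column
of `X` is smaller than that of `Y`. -/
def extLt (q : ℕ) {F : Type} [Field F] (e : F ≃ Fin q) (n k : ℕ)
    (X Y : Submodule F (Fin n → F)) : Prop :=
  ∃ (A : Fin k → Fin n → F) (pivA : Fin k → Fin n)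
    (B : Fin k → Fin n → F) (pivB : Fin k → Fin n),
    GeneratesRREF A pivA X ∧ GeneratesRREF B pivB Y ∧
      ∃ t : Fin n, (∀ s, s < t → extColVal q e A pivA s = extColVal q e B pivB s) ∧
        extColVal q e A pivA t < extColVal q e B pivB t

namespace RREFAux
open Finset

variable {F : Type} [Field F] {k n : ℕ}

theorem eval_piv {A : Fin k → Fin n → F} {piv : Fin k → Fin n}
    (h : IsRREFPiv A piv) (c : Fin k → F) (i : Fin k) :
    (∑ i', c i' • A i') (piv i) = c i := by
  obtain ⟨hm, h1, h0, hp⟩ := h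
  simp only [Finset.sum_apply, Pi.smul_apply, smul_eq_mul]
  rw [Finset.sum_eq_single i]
  · rw [h1, mul_one]
  · intro b _ hb; rw [hp i b hb, mul_zero]
  · simp

theorem li {A : Fin k → Fin n → F} {piv : Fin k → Fin n}
    (h : IsRREFPiv A piv) : LinearIndependent F A := by
  rw [Fintype.linearIndependent_iff]
  intro g hg i
  have := congrFun hg (piv i)
  rwa [eval_piv h g i] at this

theorem coords {A : Fin k → Fin n → F} {piv : Fin k → Fin n}
    (h : IsRREFPiv A piv) {x : Fin n → F}
    (hx : x ∈ Submodule.span F (Set.range A)) :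
    x = ∑ i, x (piv i) • A i := by
  obtain ⟨c, hc⟩ := (Submodule.mem_span_range_iff_exists_fun F).1 hx
  have hxc : ∀ i, x (piv i) = c i := fun i => by rw [← hc]; exact eval_piv h c i
  have : ∑ i, x (piv i) • A i = ∑ i, c i • A i :=
    Finset.sum_congr rfl fun i _ => by rw [hxc]
  rw [this, hc]

theorem leading_eq_piv {A : Fin k → Fin n → F} {piv : Fin k → Fin n}
    (h : IsRREFPiv A piv) {x : Fin n → F}
    (hx : x ∈ Submodule.span F (Set.range A)) {c : Fin n}
    (hc : x c ≠ 0) (hlt : ∀ c' < c, x c' = 0) : ∃ i, piv i = c := by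
  classical
  obtain ⟨hm, h1, h0, hp⟩ := h
  have hxe := coords ⟨hm, h1, h0, hp⟩ hx
  have hS : (Finset.univ.filter (fun i => x (piv i) ≠ 0)).Nonempty := by
    by_contra hno
    apply hc
    rw [Finset.not_nonempty_iff_eq_empty, Finset.filter_eq_empty_iff] at hno
    simp only [not_not] at hno
    rw [hxe]; simp only [Finset.sum_apply, Pi.smul_apply, smul_eq_mul]
    exact Finset.sum_eq_zero fun i _ => by rw [hno (Finset.mem_univ i), zero_mul]
  obtain ⟨i0, hi0, hmin⟩ := Finset.exists_min_image _ id hS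
  rw [Finset.mem_filter] at hi0
  have hi0ne : x (piv i0) ≠ 0 := hi0.2
  -- x vanishes strictly left of piv i0
  have hvan : ∀ c' < piv i0, x c' = 0 := by
    intro c' hc'
    rw [hxe]; simp only [Finset.sum_apply, Pi.smul_apply, smul_eq_mul]
    apply Finset.sum_eq_zero
    intro i _
    by_cases hxi : x (piv i) = 0
    · rw [hxi, zero_mul]
    · have : i0 ≤ i := hmin i (Finset.mem_filter.2 ⟨Finset.mem_univ i, hxi⟩)
      have : piv i0 ≤ piv i := hm.monotone this
      rw [h0 i c' (lt_of_lt_of_le hc' this), mul_zero]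
  refine ⟨i0, ?_⟩
  rcases lt_trichotomy (piv i0) c with hlt2 | heq | hgt
  · exact absurd (hlt _ hlt2) hi0ne
  · exact heq
  · exact absurd (hvan _ hgt) hc

theorem piv_eq {A B : Fin k → Fin n → F} {pa pb : Fin k → Fin n}
    (ha : IsRREFPiv A pa) (hb : IsRREFPiv B pb)
    (hspan : Submodule.span F (Set.range A) = Submodule.span F (Set.range B)) :
    pa = pb := by
  classical
  have key : ∀ i, ∃ i', pb i' = pa i := by
    intro i
    refine leading_eq_piv (x := A i) hb ?_ ?_ ?_
    · rw [← hspan]; exact Submodule.subset_span ⟨i, rfl⟩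
    · rw [ha.2.1 i]; exact one_ne_zero
    · exact fun c' h => ha.2.2.1 i c' h
  have key' : ∀ i, ∃ i', pa i' = pb i := by
    intro i
    refine leading_eq_piv (x := B i) ha ?_ ?_ ?_
    · rw [hspan]; exact Submodule.subset_span ⟨i, rfl⟩
    · rw [hb.2.1 i]; exact one_ne_zero
    · exact fun c' h => hb.2.2.1 i c' h
  -- two strictly monotone maps with the same range
  have hrange : Set.range pa = Set.range pb := by
    apply Set.eq_of_subset_of_subset
    · rintro _ ⟨i, rfl⟩; obtain ⟨i', hi'⟩ := key i; exact ⟨i', hi'⟩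
    · rintro _ ⟨i, rfl⟩; obtain ⟨i', hi'⟩ := key' i; exact ⟨i', hi'⟩
  have : WellFoundedLT (Fin k) := inferInstance
  exact (StrictMono.range_inj ha.1 hb.1).1 hrange

theorem rref_unique {A B : Fin k → Fin n → F} {pa pb : Fin k → Fin n}
    (ha : IsRREFPiv A pa) (hb : IsRREFPiv B pb)
    (hspan : Submodule.span F (Set.range A) = Submodule.span F (Set.range B)) :
    A = B ∧ pa = pb := by
  have hpe : pa = pb := piv_eq ha hb hspan
  subst hpe
  refine ⟨?_, rfl⟩
  funext i
  have hBi : (B i : Fin n → F) ∈ Submodule.span F (Set.range A) := by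
    rw [hspan]; exact Submodule.subset_span ⟨i, rfl⟩
  have := coords ha hBi
  rw [this]
  rw [Finset.sum_eq_single i]
  · rw [hb.2.1 i, one_smul]
  · intro b _ hbne
    rw [hb.2.2.2 b i (Ne.symm hbne), zero_smul]
  · simp

def consZeroL (F : Type) [Field F] (m : ℕ) : (Fin m → F) →ₗ[F] (Fin (m+1) → F) where
  toFun y := Fin.cons 0 y
  map_add' y z := by
    funext i
    induction i using Fin.cases <;> simp
  map_smul' c y := by
    funext i
    induction i using Fin.cases <;> simp

theorem cons_tail_self {m : ℕ} {y : Fin (m+1) → F} (hy : y 0 = 0) :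
    (Fin.cons 0 (y ∘ Fin.succ) : Fin (m+1) → F) = y := by
  funext i
  induction i using Fin.cases <;> simp [hy]

theorem exists_rref : ∀ (n : ℕ) (X : Submodule F (Fin n → F)),
    ∃ (k : ℕ) (A : Fin k → Fin n → F) (piv : Fin k → Fin n),
      IsRREFPiv A piv ∧ Submodule.span F (Set.range A) = X := by
  intro n
  induction n with
  | zero =>
    intro X
    refine ⟨0, Fin.elim0, Fin.elim0, ⟨fun a => a.elim0, fun i => i.elim0,
      fun i => i.elim0, fun i => i.elim0⟩, ?_⟩
    have : X = ⊥ := by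
      ext x
      simp only [Submodule.mem_bot]
      constructor
      · intro _; funext i; exact i.elim0
      · rintro rfl; exact X.zero_mem
    rw [this]
    have : Set.range (Fin.elim0 : Fin 0 → Fin 0 → F) = ∅ := by
      ext x; simp only [Set.mem_range, Set.mem_empty_iff_false, iff_false]
      rintro ⟨i, -⟩; exact i.elim0
    rw [this, Submodule.span_empty]
  | succ m ih =>
    intro X
    classical
    set T : (Fin (m+1) → F) →ₗ[F] (Fin m → F) := LinearMap.funLeft F F Fin.succ with hT
    have hTapp : ∀ x : Fin (m+1) → F, T x = x ∘ Fin.succ := fun _ => rfl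
    by_cases hz : ∀ x ∈ X, x 0 = 0
    · -- no pivot in column 0
      obtain ⟨k, A', piv', hR', hsp'⟩ := ih (Submodule.map T X)
      refine ⟨k, fun r => Fin.cons 0 (A' r), fun r => (piv' r).succ, ⟨?_, ?_, ?_, ?_⟩, ?_⟩
      · exact fun a b h => Fin.succ_lt_succ_iff.2 (hR'.1 h)
      · intro i; simpa using hR'.2.1 i
      · intro i j hj
        induction j using Fin.cases with
        | zero => simp
        | succ c => simpa using hR'.2.2.1 i c (by simpa using hj)
      · intro i i' hne; simpa using hR'.2.2.2 i i' hne
      · have : Set.range (fun r => (Fin.cons 0 (A' r) : Fin (m+1) → F)) =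
            (consZeroL F m) '' Set.range A' := by
          rw [← Set.range_comp]; rfl
        rw [this, ← Submodule.map_span, hsp']
        ext x
        simp only [Submodule.mem_map]
        constructor
        · rintro ⟨y, ⟨z, hz', rfl⟩, rfl⟩
          have : (consZeroL F m) (T z) = z := by
            show (Fin.cons 0 (z ∘ Fin.succ) : Fin (m+1) → F) = z
            exact cons_tail_self (hz z hz')
          rw [this]; exact hz'
        · intro hx
          exact ⟨T x, ⟨x, hx, rfl⟩, cons_tail_self (hz x hx)⟩
    · -- column 0 is a pivot
      push_neg at hz
      obtain ⟨w, hwX, hw0⟩ := hz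
      set x0 : Fin (m+1) → F := (w 0)⁻¹ • w with hx0def
      have hx0X : x0 ∈ X := X.smul_mem _ hwX
      have hx00 : x0 0 = 1 := by
        simp [hx0def, inv_mul_cancel₀ hw0]
      set K : Submodule F (Fin (m+1) → F) := X ⊓ LinearMap.ker (LinearMap.proj (R := F) (φ := fun _ : Fin (m+1) => F) 0) with hK
      have hKmem : ∀ y, y ∈ K ↔ y ∈ X ∧ y 0 = 0 := by
        intro y; simp [hK, LinearMap.mem_ker]
      obtain ⟨k, A', piv', hR', hsp'⟩ := ih (Submodule.map T K)
      set C : Fin k → Fin (m+1) → F := fun i => Fin.cons 0 (A' i) with hC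
      have hCmem : ∀ i, C i ∈ K := by
        intro i
        have : A' i ∈ Submodule.map T K := by
          rw [← hsp']; exact Submodule.subset_span ⟨i, rfl⟩
        obtain ⟨y, hyK, hyT⟩ := this
        have : C i = y := by
          rw [hC]; show (Fin.cons 0 (A' i) : Fin (m+1) → F) = y
          rw [← hyT, hTapp]
          exact cons_tail_self ((hKmem y).1 hyK).2
        rw [this]; exact hyK
      set a0 : Fin (m+1) → F := x0 - ∑ i, x0 ((piv' i).succ) • C i with ha0
      have ha0X : a0 ∈ X := by
        apply X.sub_mem hx0X
        exact Submodule.sum_mem X fun i _ => X.smul_mem _ (((hKmem _).1 (hCmem i)).1)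
      have hC0 : ∀ i, C i 0 = 0 := fun i => by simp [hC]
      have hCsucc : ∀ i c, C i c.succ = A' i c := fun i c => by simp [hC]
      have ha00 : a0 0 = 1 := by
        rw [ha0]
        simp only [Pi.sub_apply, Finset.sum_apply, Pi.smul_apply, smul_eq_mul]
        rw [hx00, Finset.sum_eq_zero (fun i _ => by rw [hC0, mul_zero]), sub_zero]
      have ha0piv : ∀ i, a0 ((piv' i).succ) = 0 := by
        intro i
        rw [ha0]
        simp only [Pi.sub_apply, Finset.sum_apply, Pi.smul_apply, smul_eq_mul]
        rw [Finset.sum_eq_single i]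
        · rw [hCsucc, hR'.2.1 i, mul_one, sub_self]
        · intro b _ hbne
          rw [hCsucc, hR'.2.2.2 i b hbne, mul_zero]
        · simp
      refine ⟨k+1, Fin.cons a0 C, Fin.cons 0 (fun i => (piv' i).succ), ⟨?_, ?_, ?_, ?_⟩, ?_⟩
      · intro a b hab
        induction a using Fin.cases with
        | zero =>
          induction b using Fin.cases with
          | zero => exact absurd hab (lt_irrefl _)
          | succ b' => simpa using Fin.succ_pos (piv' b')
        | succ a' =>
          induction b using Fin.cases with
          | zero => exact absurd hab (by simp [Fin.lt_iff_val_lt_val])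
          | succ b' =>
            simp only [Fin.cons_succ]
            exact Fin.succ_lt_succ_iff.2 (hR'.1 (by simpa using hab))
      · intro i
        induction i using Fin.cases with
        | zero => simpa using ha00
        | succ i' => simpa [hCsucc] using hR'.2.1 i'
      · intro i j hj
        induction i using Fin.cases with
        | zero => simp only [Fin.cons_zero] at hj; exact absurd hj (Fin.not_lt_zero j)
        | succ i' =>
          simp only [Fin.cons_succ] at hj ⊢
          induction j using Fin.cases with
          | zero => exact hC0 i'
          | succ c => rw [hCsucc]; exact hR'.2.2.1 i' c (by simpa using hj)
      · intro i i' hne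
        induction i using Fin.cases with
        | zero =>
          simp only [Fin.cons_zero]
          induction i' using Fin.cases with
          | zero => exact absurd rfl hne
          | succ j => simpa using hC0 j
        | succ iv =>
          simp only [Fin.cons_succ]
          induction i' using Fin.cases with
          | zero => simpa using ha0piv iv
          | succ j =>
            simp only [Fin.cons_succ]
            rw [hCsucc]
            exact hR'.2.2.2 iv j (by simpa [Fin.succ_inj] using hne)
      · -- span
        apply le_antisymm
        · rw [Submodule.span_le]
          rintro _ ⟨i, rfl⟩
          induction i using Fin.cases with
          | zero => exact ha0X
          | succ i' => exact ((hKmem _).1 (hCmem i')).1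
        · intro x hx
          have hKspan : K ≤ Submodule.span F (Set.range (Fin.cons a0 C : Fin (k+1) → Fin (m+1) → F)) := by
            intro y hy
            have hyT : T y ∈ Submodule.span F (Set.range A') := by
              rw [hsp']; exact ⟨y, hy, rfl⟩
            have : (consZeroL F m) (T y) ∈ Submodule.map (consZeroL F m) (Submodule.span F (Set.range A')) :=
              Submodule.mem_map_of_mem hyT
            rw [Submodule.map_span, ← Set.range_comp] at this
            have hyy : (consZeroL F m) (T y) = y := cons_tail_self ((hKmem y).1 hy).2
            rw [hyy] at this
            refine Submodule.span_mono ?_ this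
            rintro _ ⟨i, rfl⟩
            exact ⟨i.succ, by simp [hC]; rfl⟩
          have hz0 : x - x 0 • a0 ∈ K := by
            rw [hKmem]
            constructor
            · exact X.sub_mem hx (X.smul_mem _ ha0X)
            · simp [ha00]
          have h1 : a0 ∈ Submodule.span F (Set.range (Fin.cons a0 C : Fin (k+1) → Fin (m+1) → F)) :=
            Submodule.subset_span ⟨0, by simp⟩
          have := Submodule.add_mem _ (Submodule.smul_mem _ (x 0) h1) (hKspan hz0)
          simpa using this

/-! ### Generic counting helpers -/

theorem card_split {α : Type*} [Finite α] (p r : α → Prop) :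
    Nat.card {a // p a} = Nat.card {a // p a ∧ r a} + Nat.card {a // p a ∧ ¬ r a} := by
  classical
  rw [← Nat.card_sum]
  apply Nat.card_congr
  refine Equiv.trans (Equiv.sumCompl (fun x : {a // p a} => r x.1)).symm ?_
  exact Equiv.sumCongr (Equiv.subtypeSubtypeEquivSubtypeInter p r)
    (Equiv.subtypeSubtypeEquivSubtypeInter p (fun a => ¬ r a))

theorem card_pair_or {α β : Type*} [Finite α] [Finite β]
    (Q₁ : α → Prop) (Q₂ : β → Prop) (a₀ : α) (h : ¬ Q₁ a₀) :
    Nat.card {p : α × β // Q₁ p.1 ∨ (p.1 = a₀ ∧ Q₂ p.2)} =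
      Nat.card {a // Q₁ a} * Nat.card β + Nat.card {b // Q₂ b} := by
  classical
  rw [card_split (fun p : α × β => Q₁ p.1 ∨ (p.1 = a₀ ∧ Q₂ p.2)) (fun p => Q₁ p.1)]
  congr 1
  · rw [← Nat.card_prod]
    apply Nat.card_congr
    refine Equiv.trans (Equiv.subtypeEquivRight ?_)
      (Equiv.prodSubtypeFstEquivSubtypeProd (p := Q₁))
    intro p
    constructor
    · rintro ⟨-, hq⟩; exact hq
    · intro hq; exact ⟨Or.inl hq, hq⟩
  · apply Nat.card_congr
    refine ⟨fun x => ⟨x.1.2, ?_⟩, fun y => ⟨(a₀, y.1), ?_⟩, ?_, ?_⟩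
    · rcases x.2 with ⟨hor, hnq⟩
      rcases hor with hq | ⟨-, h2⟩
      · exact absurd hq hnq
      · exact h2
    · exact ⟨Or.inr ⟨rfl, y.2⟩, h⟩
    · rintro ⟨⟨a, b⟩, ⟨hor, hnq⟩⟩
      rcases hor with hq | ⟨rfl, h2⟩
      · exact absurd hq hnq
      · rfl
    · rintro ⟨b, hb⟩; rfl

/-! ### Digit values of columns -/

variable {q : ℕ}

def dEquiv (e : F ≃ Fin q) (k : ℕ) : (Fin k → F) ≃ Fin (q ^ k) :=
  (Equiv.arrowCongr (Equiv.refl (Fin k)) e).trans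
    ((Equiv.arrowCongr Fin.revPerm (Equiv.refl (Fin q))).trans finFunctionFinEquiv)

theorem dEquiv_val (e : F ≃ Fin q) (k : ℕ) (v : Fin k → F) :
    ((dEquiv e k v : Fin (q ^ k)) : ℕ) = ∑ r : Fin k, (e (v r) : ℕ) * q ^ (k - 1 - (r : ℕ)) := by
  show ((finFunctionFinEquiv _ : Fin (q^k)) : ℕ) = _
  rw [finFunctionFinEquiv_apply]
  refine Fintype.sum_equiv Fin.revPerm _ _ ?_
  intro i
  show (e (v _) : ℕ) * q ^ (i : ℕ) = (e (v (Fin.revPerm i)) : ℕ) * q ^ (k - 1 - ((Fin.revPerm i) : ℕ))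
  have h1 : (Fin.revPerm.symm i : Fin k) = Fin.revPerm i := rfl
  rw [h1]
  have h2 : ((Fin.revPerm i : Fin k) : ℕ) = k - ((i : ℕ) + 1) := Fin.val_rev i
  have h3 : k - 1 - ((Fin.revPerm i : Fin k) : ℕ) = (i : ℕ) := by
    have := i.2; omega
  rw [h3]
  rfl

theorem dval_lt (e : F ≃ Fin q) (k : ℕ) (v : Fin k → F) :
    ∑ r : Fin k, (e (v r) : ℕ) * q ^ (k - 1 - (r : ℕ)) < q ^ k := by
  rw [← dEquiv_val]; exact (dEquiv e k v).2

theorem dval_inj (e : F ≃ Fin q) (k : ℕ) {v w : Fin k → F}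
    (h : ∑ r : Fin k, (e (v r) : ℕ) * q ^ (k - 1 - (r : ℕ))
       = ∑ r : Fin k, (e (w r) : ℕ) * q ^ (k - 1 - (r : ℕ))) : v = w := by
  apply (dEquiv e k).injective
  apply Fin.val_injective
  rw [dEquiv_val, dEquiv_val, h]

theorem card_dval_lt (e : F ≃ Fin q) (k : ℕ) (c : ℕ) (hc : c ≤ q ^ k) :
    Nat.card {v : Fin k → F // ∑ r : Fin k, (e (v r) : ℕ) * q ^ (k - 1 - (r : ℕ)) < c} = c := by
  have h1 : Nat.card {v : Fin k → F // ∑ r : Fin k, (e (v r) : ℕ) * q ^ (k - 1 - (r : ℕ)) < c}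
      = Nat.card {i : Fin (q ^ k) // (i : ℕ) < c} := by
    apply Nat.card_congr
    refine Equiv.subtypeEquiv (dEquiv e k) ?_
    intro v
    rw [dEquiv_val]
  rw [h1]
  have h2 : Nat.card {i : Fin (q ^ k) // (i : ℕ) < c} = Nat.card (Fin c) := by
    apply Nat.card_congr
    exact ⟨fun x => ⟨x.1, x.2⟩, fun j => ⟨⟨j.1, lt_of_lt_of_le j.2 hc⟩, j.2⟩,
      fun x => rfl, fun j => rfl⟩
  rw [h2, Nat.card_eq_fintype_card, Fintype.card_fin]

/-! ### Structure of RREF matrices: peeling the last column -/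

theorem piv_ne_last_lt {m k : ℕ} {p : Fin k → Fin (m+1)} {r : Fin k}
    (h : p r ≠ Fin.last m) : (p r : ℕ) < m := by
  have h1 : (p r : ℕ) < m + 1 := (p r).2
  have h2 : (p r : ℕ) ≠ m := fun hh => h (Fin.ext hh)
  omega

/-- Peeling the last column off an RREF matrix with no pivot in the last column. -/
def dropColEquiv (F : Type) [Field F] (m k : ℕ) :
    {Bp : (Fin k → Fin (m+1) → F) × (Fin k → Fin (m+1)) //
        IsRREFPiv Bp.1 Bp.2 ∧ ¬∃ r, Bp.2 r = Fin.last m} ≃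
    (Fin k → F) × {Bp : (Fin k → Fin m → F) × (Fin k → Fin m) // IsRREFPiv Bp.1 Bp.2} where
  toFun x :=
    ⟨fun r => x.1.1 r (Fin.last m),
     ⟨(fun r c => x.1.1 r c.castSucc,
       fun r => (x.1.2 r).castLT (piv_ne_last_lt (fun hh => x.2.2 ⟨r, hh⟩))),
      by
        obtain ⟨⟨hm, h1, h0, hp⟩, hno⟩ := x.2
        refine ⟨fun a b hab => ?_, fun i => ?_, fun i j hj => ?_, fun i i' hne => ?_⟩
        · show ((x.1.2 a : ℕ) : ℕ) < (x.1.2 b : ℕ)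
          exact hm hab
        · show x.1.1 i (Fin.castSucc ((x.1.2 i).castLT _)) = 1
          rw [Fin.castSucc_castLT]
          exact h1 i
        · show x.1.1 i j.castSucc = 0
          apply h0
          show (j.castSucc : ℕ) < (x.1.2 i : ℕ)
          exact hj
        · show x.1.1 i' (Fin.castSucc ((x.1.2 i).castLT _)) = 0
          rw [Fin.castSucc_castLT]
          exact hp i i' hne⟩⟩
  invFun y :=
    ⟨(fun r => Fin.snoc (y.2.1.1 r) (y.1 r), fun r => (y.2.1.2 r).castSucc),
     by
      obtain ⟨hm, h1, h0, hp⟩ := y.2.2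
      refine ⟨⟨fun a b hab => ?_, fun i => ?_, fun i j hj => ?_, fun i i' hne => ?_⟩, ?_⟩
      · exact Fin.castSucc_lt_castSucc_iff.2 (hm hab)
      · simp only [Fin.snoc_castSucc]; exact h1 i
      · induction j using Fin.lastCases with
        | last =>
          exfalso
          exact absurd (lt_trans hj (Fin.castSucc_lt_last _)) (lt_irrefl _)
        | cast c =>
          simp only [Fin.snoc_castSucc]
          exact h0 i c (Fin.castSucc_lt_castSucc_iff.1 hj)
      · simp only [Fin.snoc_castSucc]; exact hp i i' hne
      · rintro ⟨r, hr⟩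
        exact absurd hr (Fin.ne_last_of_lt (Fin.castSucc_lt_last _))⟩
  left_inv x := by
    apply Subtype.ext
    refine Prod.ext ?_ ?_
    · funext r c
      induction c using Fin.lastCases with
      | last => simp
      | cast c => simp
    · funext r
      simp [Fin.castSucc_castLT]
  right_inv y := by
    refine Prod.ext ?_ (Subtype.ext (Prod.ext ?_ ?_))
    · funext r; simp
    · funext r c; simp
    · funext r; apply Fin.ext; simp

/-- rows other than the given pivot row: if `p r = last` for an RREF, `r` is the last row. -/
theorem piv_last_row {F : Type} [Field F] {m k' : ℕ}
    {B : Fin (k'+1) → Fin (m+1) → F} {p : Fin (k'+1) → Fin (m+1)}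
    (h : IsRREFPiv B p) (hex : ∃ r, p r = Fin.last m) : p (Fin.last k') = Fin.last m := by
  obtain ⟨r, hr⟩ := hex
  rcases eq_or_lt_of_le (Fin.le_last r) with hrl | hrl
  · rwa [hrl] at hr
  · exfalso
    have := h.1 hrl
    rw [hr] at this
    exact absurd (lt_of_le_of_lt (Fin.le_last _) this) (lt_irrefl _)

/-- Peeling the last column (a pivot column) and last row off an RREF matrix. -/
def dropRowColEquiv (F : Type) [Field F] (m k' : ℕ) :
    {Bp : (Fin (k'+1) → Fin (m+1) → F) × (Fin (k'+1) → Fin (m+1)) //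
        IsRREFPiv Bp.1 Bp.2 ∧ ∃ r, Bp.2 r = Fin.last m} ≃
    {Bp : (Fin k' → Fin m → F) × (Fin k' → Fin m) // IsRREFPiv Bp.1 Bp.2} where
  toFun x :=
    ⟨(fun r c => x.1.1 r.castSucc c.castSucc,
      fun r => (x.1.2 r.castSucc).castLT (by
        have hlast := piv_last_row x.2.1 x.2.2
        have h2 : x.1.2 r.castSucc < x.1.2 (Fin.last k') := x.2.1.1 (Fin.castSucc_lt_last r)
        rw [hlast] at h2
        exact h2)),
     by
      obtain ⟨⟨hm, h1, h0, hp⟩, hex⟩ := x.2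
      refine ⟨fun a b hab => ?_, fun i => ?_, fun i j hj => ?_, fun i i' hne => ?_⟩
      · show ((x.1.2 a.castSucc : ℕ) : ℕ) < (x.1.2 b.castSucc : ℕ)
        exact hm (Fin.castSucc_lt_castSucc_iff.2 hab)
      · show x.1.1 i.castSucc (Fin.castSucc _) = 1
        rw [Fin.castSucc_castLT]
        exact h1 i.castSucc
      · show x.1.1 i.castSucc j.castSucc = 0
        apply h0
        show (j.castSucc : ℕ) < (x.1.2 i.castSucc : ℕ)
        exact hj
      · show x.1.1 i'.castSucc (Fin.castSucc _) = 0
        rw [Fin.castSucc_castLT]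
        exact hp i.castSucc i'.castSucc (by
          intro hh
          exact hne (Fin.castSucc_injective _ hh))⟩
  invFun y :=
    ⟨(Fin.snoc (fun r => Fin.snoc (y.1.1 r) 0) (Fin.snoc (0 : Fin m → F) 1),
      Fin.snoc (fun r => (y.1.2 r).castSucc) (Fin.last m)),
     by
      obtain ⟨hm, h1, h0, hp⟩ := y.2
      refine ⟨⟨fun a b hab => ?_, fun i => ?_, fun i j hj => ?_, fun i i' hne => ?_⟩,
        ⟨Fin.last k', by simp only [Fin.snoc_last]⟩⟩
      · induction a using Fin.lastCases with
        | last =>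
          exfalso
          exact absurd (lt_of_lt_of_le hab (Fin.le_last b)) (lt_irrefl _)
        | cast a' =>
          induction b using Fin.lastCases with
          | last =>
            simp only [Fin.snoc_castSucc, Fin.snoc_last]
            exact Fin.castSucc_lt_last _
          | cast b' =>
            simp only [Fin.snoc_castSucc, Fin.snoc_castSucc]
            exact Fin.castSucc_lt_castSucc_iff.2 (hm (Fin.castSucc_lt_castSucc_iff.1 hab))
      · induction i using Fin.lastCases with
        | last => simp only [Fin.snoc_last, Fin.snoc_last, Fin.snoc_last]
        | cast i' =>
          simp only [Fin.snoc_castSucc, Fin.snoc_castSucc, Fin.snoc_castSucc]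
          exact h1 i'
      · induction i using Fin.lastCases with
        | last =>
          simp only [Fin.snoc_last] at hj ⊢
          induction j using Fin.lastCases with
          | last => exact absurd hj (lt_irrefl _)
          | cast j' => simp only [Fin.snoc_castSucc]; rfl
        | cast i' =>
          simp only [Fin.snoc_castSucc] at hj ⊢
          induction j using Fin.lastCases with
          | last =>
            exfalso
            exact absurd (lt_trans hj (Fin.castSucc_lt_last _)) (lt_irrefl _)
          | cast j' =>
            simp only [Fin.snoc_castSucc]
            exact h0 i' j' (Fin.castSucc_lt_castSucc_iff.1 hj)
      · induction i using Fin.lastCases with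
        | last =>
          simp only [Fin.snoc_last]
          induction i' using Fin.lastCases with
          | last => exact absurd rfl hne
          | cast i'' => simp only [Fin.snoc_castSucc, Fin.snoc_last]
        | cast iv =>
          simp only [Fin.snoc_castSucc]
          induction i' using Fin.lastCases with
          | last => simp only [Fin.snoc_last, Fin.snoc_castSucc]; rfl
          | cast i'' =>
            simp only [Fin.snoc_castSucc, Fin.snoc_castSucc]
            exact hp iv i'' (by
              intro hh
              exact hne (by rw [hh]))⟩
  left_inv x := by
    obtain ⟨⟨B, p⟩, hR, hex⟩ := x
    have hlast := piv_last_row hR hex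
    apply Subtype.ext
    refine Prod.ext ?_ ?_
    · funext r c
      induction r using Fin.lastCases with
      | last =>
        induction c using Fin.lastCases with
        | last =>
          simp only [Fin.snoc_last]
          rw [← hlast]
          exact (hR.2.1 (Fin.last k')).symm
        | cast c' =>
          simp only [Fin.snoc_last, Fin.snoc_castSucc, Pi.zero_apply]
          refine (hR.2.2.1 _ _ ?_).symm
          rw [hlast]
          exact Fin.castSucc_lt_last _
      | cast r' =>
        induction c using Fin.lastCases with
        | last =>
          simp only [Fin.snoc_castSucc, Fin.snoc_last]
          refine Eq.symm ?_
          rw [← hlast]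
          apply hR.2.2.2
          exact Fin.ne_last_of_lt (Fin.castSucc_lt_last _)
        | cast c' =>
          simp only [Fin.snoc_castSucc]
    · funext r
      induction r using Fin.lastCases with
      | last =>
        simp only [Fin.snoc_last]
        exact hlast.symm
      | cast r' => simp only [Fin.snoc_castSucc, Fin.castSucc_castLT]
  right_inv y := by
    apply Subtype.ext
    refine Prod.ext ?_ ?_
    · funext r c
      simp only [Fin.snoc_castSucc]
    · funext r
      apply Fin.ext
      simp [Fin.snoc_castSucc]

/-! ### Column values under peeling -/

section ColVal

variable (e : F ≃ Fin q)

theorem pivInd_succ_dropCol {m k : ℕ} {p : Fin k → Fin (m+1)} {p' : Fin k → Fin m}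
    (hp : ∀ r, (p' r : ℕ) = (p r : ℕ)) (ℓ : Fin m) :
    pivInd p ℓ.succ = pivInd p' ℓ := by
  unfold pivInd
  rw [Fin.rev_succ]
  refine if_congr ?_ rfl rfl
  constructor
  · rintro ⟨r, hr⟩
    refine ⟨r, Fin.ext ?_⟩
    rw [hp r, hr]
    rfl
  · rintro ⟨r, hr⟩
    refine ⟨r, Fin.ext ?_⟩
    show (p r : ℕ) = (ℓ.rev.castSucc : ℕ)
    rw [← hp r, hr]
    rfl

theorem pivInd_succ_dropRC {m k' : ℕ} {p : Fin (k'+1) → Fin (m+1)} {p' : Fin k' → Fin m}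
    (hp : ∀ r, (p' r : ℕ) = (p r.castSucc : ℕ)) (hlast : p (Fin.last k') = Fin.last m)
    (ℓ : Fin m) : pivInd p ℓ.succ = pivInd p' ℓ := by
  unfold pivInd
  rw [Fin.rev_succ]
  refine if_congr ?_ rfl rfl
  constructor
  · rintro ⟨r, hr⟩
    induction r using Fin.lastCases with
    | last =>
      exfalso
      rw [hlast] at hr
      exact absurd hr.symm (Fin.ne_last_of_lt (Fin.castSucc_lt_last _))
    | cast r' =>
      refine ⟨r', Fin.ext ?_⟩
      rw [hp r', hr]
      rfl
  · rintro ⟨r, hr⟩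
    refine ⟨r.castSucc, Fin.ext ?_⟩
    show (p r.castSucc : ℕ) = (ℓ.rev.castSucc : ℕ)
    rw [← hp r, hr]
    rfl

theorem pivInd_zero_piv {m k : ℕ} {p : Fin k → Fin (m+1)} (hex : ∃ r, p r = Fin.last m) :
    pivInd p 0 = 1 := by
  unfold pivInd
  rw [Fin.rev_zero, if_pos hex]

theorem pivInd_zero_nopiv {m k : ℕ} {p : Fin k → Fin (m+1)} (hno : ¬∃ r, p r = Fin.last m) :
    pivInd p 0 = 0 := by
  unfold pivInd
  rw [Fin.rev_zero, if_neg hno]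

theorem extColVal_succ_dropCol {m k : ℕ} {B : Fin k → Fin (m+1) → F} {p : Fin k → Fin (m+1)}
    {B' : Fin k → Fin m → F} {p' : Fin k → Fin m}
    (hB : ∀ r c, B' r c = B r c.castSucc) (hp : ∀ r, (p' r : ℕ) = (p r : ℕ)) (t : Fin m) :
    extColVal q e B p t.succ = extColVal q e B' p' t := by
  unfold extColVal
  rw [pivInd_succ_dropCol hp]
  congr 1
  refine Finset.sum_congr rfl fun r _ => ?_
  rw [Fin.rev_succ, hB]

theorem digits_succ_dropRC (he0 : (e 0 : ℕ) = 0) {m k' : ℕ}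
    {B : Fin (k'+1) → Fin (m+1) → F} {B' : Fin k' → Fin m → F}
    (hB : ∀ r c, B' r c = B r.castSucc c.castSucc)
    (hzero : ∀ c : Fin m, B (Fin.last k') c.castSucc = 0) (t : Fin m) :
    ∑ r : Fin (k'+1), (e (B r t.succ.rev) : ℕ) * q ^ (k' + 1 - 1 - (r : ℕ)) =
      q * ∑ r : Fin k', (e (B' r t.rev) : ℕ) * q ^ (k' - 1 - (r : ℕ)) := by
  rw [Fin.sum_univ_castSucc, Finset.mul_sum]
  have hlastterm : (e (B (Fin.last k') t.succ.rev) : ℕ) * q ^ (k' + 1 - 1 - (Fin.last k' : ℕ)) = 0 := by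
    rw [Fin.rev_succ, hzero, he0, zero_mul]
  rw [hlastterm, add_zero]
  refine Finset.sum_congr rfl fun r _ => ?_
  rw [Fin.rev_succ, ← hB]
  have h1 : k' + 1 - 1 - ((r.castSucc : Fin (k'+1)) : ℕ) = (k' - 1 - (r : ℕ)) + 1 := by
    have := r.2
    simp only [Fin.coe_castSucc]
    omega
  rw [h1, pow_succ]
  ring

theorem extColVal_succ_dropRC (he0 : (e 0 : ℕ) = 0) {m k' : ℕ}
    {B : Fin (k'+1) → Fin (m+1) → F} {p : Fin (k'+1) → Fin (m+1)}
    {B' : Fin k' → Fin m → F} {p' : Fin k' → Fin m}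
    (hB : ∀ r c, B' r c = B r.castSucc c.castSucc)
    (hp : ∀ r, (p' r : ℕ) = (p r.castSucc : ℕ)) (hlast : p (Fin.last k') = Fin.last m)
    (hzero : ∀ c : Fin m, B (Fin.last k') c.castSucc = 0) (t : Fin m) :
    extColVal q e B p t.succ = q * extColVal q e B' p' t := by
  unfold extColVal
  rw [pivInd_succ_dropRC hp hlast, mul_add, digits_succ_dropRC e he0 hB hzero]
  congr 1
  rw [pow_succ]
  ring

theorem extColVal_zero_nopiv {m k : ℕ} {B : Fin k → Fin (m+1) → F} {p : Fin k → Fin (m+1)}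
    (hno : ¬∃ r, p r = Fin.last m) :
    extColVal q e B p 0 = ∑ r : Fin k, (e (B r (Fin.last m)) : ℕ) * q ^ (k - 1 - (r : ℕ)) := by
  unfold extColVal
  rw [pivInd_zero_nopiv hno, zero_mul, zero_add]
  refine Finset.sum_congr rfl fun r _ => ?_
  rw [Fin.rev_zero]

theorem extColVal_zero_piv (he0 : (e 0 : ℕ) = 0) (he1 : (e 1 : ℕ) = 1) {m k' : ℕ}
    {B : Fin (k'+1) → Fin (m+1) → F} {p : Fin (k'+1) → Fin (m+1)}
    (hR : IsRREFPiv B p) (hlast : p (Fin.last k') = Fin.last m) :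
    extColVal q e B p 0 = q ^ (k' + 1) + 1 := by
  unfold extColVal
  rw [pivInd_zero_piv ⟨_, hlast⟩, one_mul]
  congr 1
  rw [Fin.sum_univ_castSucc]
  have h1 : ∀ r : Fin k', (e (B r.castSucc ((0 : Fin (m+1)).rev)) : ℕ) * q ^ (k' + 1 - 1 - ((r.castSucc : Fin (k'+1)) : ℕ)) = 0 := by
    intro r
    rw [Fin.rev_zero, ← hlast, hR.2.2.2 (Fin.last k') r.castSucc
      (Fin.ne_last_of_lt (Fin.castSucc_lt_last _)), he0, zero_mul]
  rw [Finset.sum_eq_zero (fun r _ => h1 r), zero_add, Fin.rev_zero, ← hlast,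
    hR.2.1 (Fin.last k'), he1]
  simp

end ColVal

/-! ### wPrefix lemmas -/

theorem wPrefix_zero {n k : ℕ} (piv : Fin k → Fin n) (h0 : Fin 0 → True) : True := trivial

theorem wPrefix_zero' {m k : ℕ} (piv : Fin k → Fin (m+1)) : wPrefix piv 0 = 0 := by
  unfold wPrefix
  rw [Finset.sum_filter]
  refine Finset.sum_eq_zero fun ℓ _ => ?_
  rw [if_neg (Fin.not_lt_zero ℓ)]

theorem wPrefix_succ {m k k'' : ℕ} (piv : Fin k → Fin (m+1)) (piv' : Fin k'' → Fin m)
    (hpiv : ∀ ℓ : Fin m, pivInd piv ℓ.succ = pivInd piv' ℓ) (j : Fin m) :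
    wPrefix piv j.succ = pivInd piv 0 + wPrefix piv' j := by
  unfold wPrefix
  rw [Finset.sum_filter, Finset.sum_filter, Fin.sum_univ_succ,
    if_pos (Fin.succ_pos j)]
  congr 1
  refine Finset.sum_congr rfl fun ℓ _ => ?_
  rw [hpiv ℓ]
  refine if_congr ?_ rfl rfl
  exact Fin.succ_lt_succ_iff

/-! ### Identification of `gaussNum` with the number of RREF matrices -/

set_option maxHeartbeats 1000000 in
theorem card_rref_eq_gauss (F : Type) [Field F] (a b : ℕ) :
    Nat.card {Bp : (Fin b → Fin a → F) × (Fin b → Fin a) // IsRREFPiv Bp.1 Bp.2} =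
      gaussNum F a b := by
  unfold gaussNum
  have hfr : ∀ x : {Bp : (Fin b → Fin a → F) × (Fin b → Fin a) // IsRREFPiv Bp.1 Bp.2},
      Module.finrank F (Submodule.span F (Set.range x.1.1)) = b := by
    intro x
    have h2 : LinearIndependent F x.1.1 := li x.2
    rw [finrank_span_eq_card h2, Fintype.card_fin]
  refine Nat.card_eq_of_bijective
    (α := {Bp : (Fin b → Fin a → F) × (Fin b → Fin a) // IsRREFPiv Bp.1 Bp.2})
    (β := {X : Submodule F (Fin a → F) // Module.finrank F X = b})
    (fun x => ⟨Submodule.span F (Set.range x.1.1), hfr x⟩) ?_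
  constructor
  · intro x y hxy
    have hsp : Submodule.span F (Set.range x.1.1) = Submodule.span F (Set.range y.1.1) :=
      congrArg Subtype.val hxy
    obtain ⟨hAB, hpq⟩ := rref_unique x.2 y.2 hsp
    exact Subtype.ext (Prod.ext hAB hpq)
  · rintro ⟨X, hX⟩
    obtain ⟨k', A', piv', hR, hsp⟩ := exists_rref a X
    have hk : k' = b := by
      have h2 : LinearIndependent F A' := li hR
      rw [← hX, ← hsp, finrank_span_eq_card h2, Fintype.card_fin]
    subst hk
    exact ⟨⟨(A', piv'), hR⟩, Subtype.ext hsp⟩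

/-! ### The main count, on the matrix side -/

def LtA {F : Type} [Field F] (q : ℕ) (e : F ≃ Fin q) {n k : ℕ}
    (A : Fin k → Fin n → F) (piv : Fin k → Fin n) :
    ((Fin k → Fin n → F) × (Fin k → Fin n)) → Prop := fun Bp =>
  ∃ t : Fin n, (∀ s, s < t → extColVal q e Bp.1 Bp.2 s = extColVal q e A piv s) ∧
    extColVal q e Bp.1 Bp.2 t < extColVal q e A piv t

def subtypeConjEquiv {α : Type*} (P R L : α → Prop) :
    {a // (P a ∧ L a) ∧ R a} ≃ {x : {b // P b ∧ R b} // L x.1} :=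
  ⟨fun a => ⟨⟨a.1, a.2.1.1, a.2.2⟩, a.2.1.2⟩,
   fun x => ⟨x.1.1, ⟨x.1.2.1, x.2⟩, x.1.2.2⟩,
   fun a => rfl, fun x => rfl⟩

set_option maxHeartbeats 2000000 in
theorem count_lt (F : Type) [Field F] [Fintype F] {q : ℕ} (e : F ≃ Fin q)
    (he0 : (e 0 : ℕ) = 0) (he1 : (e 1 : ℕ) = 1) :
    ∀ (n k : ℕ) (A : Fin k → Fin n → F) (piv : Fin k → Fin n), IsRREFPiv A piv →
    Nat.card {Bp : (Fin k → Fin n → F) × (Fin k → Fin n) //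
        IsRREFPiv Bp.1 Bp.2 ∧ LtA q e A piv Bp} =
      ∑ j : Fin n,
        (pivInd piv j * q ^ (k - wPrefix piv j) +
            (1 - pivInd piv j) *
              ((∑ r : Fin k, (e (A r j.rev) : ℕ) * q ^ (k - 1 - (r : ℕ))) /
                q ^ wPrefix piv j)) *
          gaussNum F (n - 1 - (j : ℕ)) (k - wPrefix piv j) := by
  have hq : 0 < q := lt_of_le_of_lt (Nat.zero_le _) (e 0).2
  intro n
  induction n with
  | zero =>
    intro k A piv hA
    rw [Finset.univ_eq_empty, Finset.sum_empty]
    have : IsEmpty {Bp : (Fin k → Fin 0 → F) × (Fin k → Fin 0) //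
        IsRREFPiv Bp.1 Bp.2 ∧ LtA q e A piv Bp} := by
      constructor
      rintro ⟨Bp, -, t, -⟩
      exact t.elim0
    exact Nat.card_of_isEmpty
  | succ m ih =>
    intro k A piv hA
    by_cases hex : ∃ r, piv r = Fin.last m
    · -- the last column is a pivot column of A
      match k, A, piv, hA, hex with
      | 0, A, piv, hA, hex => exact absurd hex (by rintro ⟨r, -⟩; exact r.elim0)
      | k' + 1, A, piv, hA, hex =>
      have hlast : piv (Fin.last k') = Fin.last m := piv_last_row hA hex
      have hzero : ∀ c : Fin m, A (Fin.last k') c.castSucc = 0 := fun c => by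
        apply hA.2.2.1
        rw [hlast]
        exact Fin.castSucc_lt_last c
      -- the reduced matrix
      set x : {Bp : (Fin (k'+1) → Fin (m+1) → F) × (Fin (k'+1) → Fin (m+1)) //
          IsRREFPiv Bp.1 Bp.2 ∧ ∃ r, Bp.2 r = Fin.last m} := ⟨(A, piv), hA, hex⟩ with hxdef
      set A' : Fin k' → Fin m → F := ((dropRowColEquiv F m k') x).1.1 with hA'def
      set piv' : Fin k' → Fin m := ((dropRowColEquiv F m k') x).1.2 with hpiv'def
      have hA' : IsRREFPiv A' piv' := ((dropRowColEquiv F m k') x).2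
      have hA'eq : ∀ r c, A' r c = A r.castSucc c.castSucc := fun r c => rfl
      have hpiv'eq : ∀ r, (piv' r : ℕ) = (piv r.castSucc : ℕ) := fun r => rfl
      -- split the counted set according to whether B has a pivot in the last column
      rw [card_split _ (fun Bp => ∃ r, Bp.2 r = Fin.last m)]
      -- first part: B has a pivot in the last column
      have hpart1 : Nat.card {Bp : (Fin (k'+1) → Fin (m+1) → F) × (Fin (k'+1) → Fin (m+1)) //
          (IsRREFPiv Bp.1 Bp.2 ∧ LtA q e A piv Bp) ∧ ∃ r, Bp.2 r = Fin.last m} =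
          Nat.card {Bp : (Fin k' → Fin m → F) × (Fin k' → Fin m) //
            IsRREFPiv Bp.1 Bp.2 ∧ LtA q e A' piv' Bp} := by
        apply Nat.card_congr
        refine ((subtypeConjEquiv _ _ _).trans
          ((Equiv.subtypeEquiv (dropRowColEquiv F m k') ?_).trans
            (Equiv.subtypeSubtypeEquivSubtypeInter _ _)))
        -- the lex condition transfers
        intro y
        have hBlast : y.1.2 (Fin.last k') = Fin.last m := piv_last_row y.2.1 y.2.2
        have hBzero : ∀ c : Fin m, y.1.1 (Fin.last k') c.castSucc = 0 := fun c => by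
          apply y.2.1.2.2.1
          rw [hBlast]
          exact Fin.castSucc_lt_last c
        have hB0 : extColVal q e y.1.1 y.1.2 0 = q ^ (k' + 1) + 1 :=
          extColVal_zero_piv e he0 he1 y.2.1 hBlast
        have hA0 : extColVal q e A piv 0 = q ^ (k' + 1) + 1 :=
          extColVal_zero_piv e he0 he1 hA hlast
        have hBs : ∀ t : Fin m, extColVal q e y.1.1 y.1.2 t.succ =
            q * extColVal q e ((dropRowColEquiv F m k') y).1.1 ((dropRowColEquiv F m k') y).1.2 t :=
          fun t => extColVal_succ_dropRC e he0 (fun r c => rfl) (fun r => rfl) hBlast hBzero t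
        have hAs : ∀ t : Fin m, extColVal q e A piv t.succ = q * extColVal q e A' piv' t :=
          fun t => extColVal_succ_dropRC e he0 hA'eq hpiv'eq hlast hzero t
        simp only [LtA]
        constructor
        · rintro ⟨t, hs, hlt⟩
          induction t using Fin.cases with
          | zero => rw [hB0, hA0] at hlt; exact absurd hlt (lt_irrefl _)
          | succ t' =>
            refine ⟨t', fun s hs' => ?_, ?_⟩
            · have := hs s.succ (Fin.succ_lt_succ_iff.2 hs')
              rw [hBs s, hAs s] at this
              exact Nat.eq_of_mul_eq_mul_left hq this
            · have := hlt
              rw [hBs t', hAs t'] at this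
              exact Nat.lt_of_mul_lt_mul_left this
        · rintro ⟨t', hs, hlt⟩
          refine ⟨t'.succ, fun s hs' => ?_, ?_⟩
          · induction s using Fin.cases with
            | zero => rw [hB0, hA0]
            | succ s' =>
              rw [hBs s', hAs s', hs s' (Fin.succ_lt_succ_iff.1 hs')]
          · rw [hBs t', hAs t']
            exact Nat.mul_lt_mul_left hq |>.2 hlt
      -- second part: B has no pivot in the last column; the lex condition is automatic
      have hpart2 : Nat.card {Bp : (Fin (k'+1) → Fin (m+1) → F) × (Fin (k'+1) → Fin (m+1)) //
          (IsRREFPiv Bp.1 Bp.2 ∧ LtA q e A piv Bp) ∧ ¬∃ r, Bp.2 r = Fin.last m} =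
          q ^ (k' + 1) * gaussNum F m (k' + 1) := by
        have he1' : Nat.card {Bp : (Fin (k'+1) → Fin (m+1) → F) × (Fin (k'+1) → Fin (m+1)) //
            (IsRREFPiv Bp.1 Bp.2 ∧ LtA q e A piv Bp) ∧ ¬∃ r, Bp.2 r = Fin.last m} =
            Nat.card ((Fin (k'+1) → F) × {Bp : (Fin (k'+1) → Fin m → F) × (Fin (k'+1) → Fin m) //
              IsRREFPiv Bp.1 Bp.2}) := by
          apply Nat.card_congr
          refine (Equiv.subtypeEquivRight ?_).trans (dropColEquiv F m (k'+1))
          intro Bp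
          constructor
          · rintro ⟨⟨h1, -⟩, h2⟩; exact ⟨h1, h2⟩
          · rintro ⟨h1, h2⟩
            refine ⟨⟨h1, ⟨0, fun s hs => absurd hs (Fin.not_lt_zero s), ?_⟩⟩, h2⟩
            rw [extColVal_zero_nopiv e h2, extColVal_zero_piv e he0 he1 hA hlast]
            exact lt_of_lt_of_le (dval_lt e (k'+1) _) (Nat.le_succ _)
        rw [he1', Nat.card_prod, card_rref_eq_gauss]
        congr 1
        rw [Nat.card_eq_fintype_card, Fintype.card_fun, Fintype.card_fin, Fintype.card_congr e,
          Fintype.card_fin]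
      rw [hpart1, hpart2, ih k' A' piv' hA']
      -- now match with the right-hand side
      rw [Fin.sum_univ_succ]
      have hterm0 : (pivInd piv 0 * q ^ (k' + 1 - wPrefix piv 0) +
          (1 - pivInd piv 0) *
            ((∑ r : Fin (k'+1), (e (A r (0 : Fin (m+1)).rev) : ℕ) * q ^ (k' + 1 - 1 - (r : ℕ))) /
              q ^ wPrefix piv 0)) *
          gaussNum F (m + 1 - 1 - ((0 : Fin (m+1)) : ℕ)) (k' + 1 - wPrefix piv 0) =
          q ^ (k' + 1) * gaussNum F m (k' + 1) := by
        rw [pivInd_zero_piv hex, wPrefix_zero']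
        norm_num
      rw [hterm0]
      rw [add_comm]
      congr 1
      refine Finset.sum_congr rfl fun j _ => ?_
      have hpivInd : ∀ ℓ : Fin m, pivInd piv ℓ.succ = pivInd piv' ℓ :=
        fun ℓ => pivInd_succ_dropRC hpiv'eq hlast ℓ
      have hw : wPrefix piv j.succ = 1 + wPrefix piv' j := by
        rw [wPrefix_succ piv piv' hpivInd j, pivInd_zero_piv hex]
      have hksub : k' + 1 - wPrefix piv j.succ = k' - wPrefix piv' j := by
        rw [hw]; omega
      have hdiv : (∑ r : Fin (k'+1), (e (A r j.succ.rev) : ℕ) * q ^ (k' + 1 - 1 - (r : ℕ))) /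
          q ^ wPrefix piv j.succ =
          (∑ r : Fin k', (e (A' r j.rev) : ℕ) * q ^ (k' - 1 - (r : ℕ))) / q ^ wPrefix piv' j := by
        rw [digits_succ_dropRC e he0 hA'eq hzero j, hw, pow_add, pow_one]
        exact Nat.mul_div_mul_left _ _ hq
      have hgind : m + 1 - 1 - ((j.succ : Fin (m+1)) : ℕ) = m - 1 - (j : ℕ) := by
        rw [Fin.val_succ]; omega
      rw [hpivInd j, hksub, hdiv, hgind]
    · -- the last column of A is not a pivot column
      have hA0 : extColVal q e A piv 0 =
          ∑ r : Fin k, (e (A r (Fin.last m)) : ℕ) * q ^ (k - 1 - (r : ℕ)) :=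
        extColVal_zero_nopiv e hex
      -- part 1 is empty
      rw [card_split _ (fun Bp => ∃ r, Bp.2 r = Fin.last m)]
      have hpart1 : Nat.card {Bp : (Fin k → Fin (m+1) → F) × (Fin k → Fin (m+1)) //
          (IsRREFPiv Bp.1 Bp.2 ∧ LtA q e A piv Bp) ∧ ∃ r, Bp.2 r = Fin.last m} = 0 := by
        have : IsEmpty {Bp : (Fin k → Fin (m+1) → F) × (Fin k → Fin (m+1)) //
            (IsRREFPiv Bp.1 Bp.2 ∧ LtA q e A piv Bp) ∧ ∃ r, Bp.2 r = Fin.last m} := by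
          constructor
          rintro ⟨⟨B, p⟩, ⟨hB, hL⟩, hBex⟩
          match k, A, piv, hA, hex, hA0, B, p, hB, hL, hBex with
          | 0, A, piv, hA, hex, hA0, B, p, hB, hL, hBex =>
            obtain ⟨r, -⟩ := hBex; exact r.elim0
          | k'' + 1, A, piv, hA, hex, hA0, B, p, hB, hL, hBex =>
            have hBlast : p (Fin.last k'') = Fin.last m := piv_last_row hB hBex
            have hB0 : extColVal q e B p 0 = q ^ (k'' + 1) + 1 :=
              extColVal_zero_piv e he0 he1 hB hBlast
            have hAlt : extColVal q e A piv 0 < q ^ (k'' + 1) := by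
              rw [hA0]; exact dval_lt e (k''+1) _
            obtain ⟨t, hs, hlt⟩ := hL
            induction t using Fin.cases with
            | zero => rw [hB0] at hlt; omega
            | succ t' =>
              have := hs 0 (Fin.succ_pos t')
              rw [hB0] at this
              omega
        exact Nat.card_of_isEmpty
      rw [hpart1, zero_add]
      -- part 2
      set A'' : Fin k → Fin m → F :=
        ((dropColEquiv F m k) ⟨(A, piv), hA, hex⟩).2.1.1 with hA''def
      set piv'' : Fin k → Fin m :=
        ((dropColEquiv F m k) ⟨(A, piv), hA, hex⟩).2.1.2 with hpiv''def
      have hA'' : IsRREFPiv A'' piv'' := ((dropColEquiv F m k) ⟨(A, piv), hA, hex⟩).2.2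
      have hA''eq : ∀ r c, A'' r c = A r c.castSucc := fun r c => rfl
      have hpiv''eq : ∀ r, (piv'' r : ℕ) = (piv r : ℕ) := fun r => rfl
      have hpart2 : Nat.card {Bp : (Fin k → Fin (m+1) → F) × (Fin k → Fin (m+1)) //
          (IsRREFPiv Bp.1 Bp.2 ∧ LtA q e A piv Bp) ∧ ¬∃ r, Bp.2 r = Fin.last m} =
          (∑ r : Fin k, (e (A r (Fin.last m)) : ℕ) * q ^ (k - 1 - (r : ℕ))) *
            gaussNum F m k +
          Nat.card {Bp : (Fin k → Fin m → F) × (Fin k → Fin m) //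
            IsRREFPiv Bp.1 Bp.2 ∧ LtA q e A'' piv'' Bp} := by
        have hstep : Nat.card {Bp : (Fin k → Fin (m+1) → F) × (Fin k → Fin (m+1)) //
            (IsRREFPiv Bp.1 Bp.2 ∧ LtA q e A piv Bp) ∧ ¬∃ r, Bp.2 r = Fin.last m} =
            Nat.card {vz : (Fin k → F) × {Bp : (Fin k → Fin m → F) × (Fin k → Fin m) //
                IsRREFPiv Bp.1 Bp.2} //
              (∑ r : Fin k, (e (vz.1 r) : ℕ) * q ^ (k - 1 - (r : ℕ))) <
                (∑ r : Fin k, (e (A r (Fin.last m)) : ℕ) * q ^ (k - 1 - (r : ℕ))) ∨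
              (vz.1 = (fun r => A r (Fin.last m)) ∧ LtA q e A'' piv'' vz.2.1)} := by
          apply Nat.card_congr
          refine (subtypeConjEquiv _ _ _).trans
            (Equiv.subtypeEquiv (dropColEquiv F m k) ?_)
          intro y
          have hB0 : extColVal q e y.1.1 y.1.2 0 =
              ∑ r : Fin k, (e (y.1.1 r (Fin.last m)) : ℕ) * q ^ (k - 1 - (r : ℕ)) :=
            extColVal_zero_nopiv e y.2.2
          have hBs : ∀ t : Fin m, extColVal q e y.1.1 y.1.2 t.succ =
              extColVal q e ((dropColEquiv F m k) y).2.1.1 ((dropColEquiv F m k) y).2.1.2 t :=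
            fun t => extColVal_succ_dropCol e (fun r c => rfl) (fun r => rfl) t
          have hAs : ∀ t : Fin m, extColVal q e A piv t.succ = extColVal q e A'' piv'' t :=
            fun t => extColVal_succ_dropCol e hA''eq hpiv''eq t
          simp only [LtA]
          constructor
          · rintro ⟨t, hs, hlt⟩
            induction t using Fin.cases with
            | zero =>
              left
              rw [hB0, hA0] at hlt
              exact hlt
            | succ t' =>
              right
              have h00 := hs 0 (Fin.succ_pos t')
              rw [hB0, hA0] at h00
              refine ⟨funext fun r => congrFun (dval_inj e k h00) r, t', fun s hs' => ?_, ?_⟩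
              · have := hs s.succ (Fin.succ_lt_succ_iff.2 hs')
                rw [hBs s, hAs s] at this
                exact this
              · have := hlt
                rw [hBs t', hAs t'] at this
                exact this
          · rintro (hlt | ⟨hveq, t', hs, hlt⟩)
            · refine ⟨0, fun s hs => absurd hs (Fin.not_lt_zero s), ?_⟩
              rw [hB0, hA0]
              exact hlt
            · refine ⟨t'.succ, fun s hs' => ?_, ?_⟩
              · induction s using Fin.cases with
                | zero =>
                  rw [hB0, hA0]
                  refine Finset.sum_congr rfl fun r _ => ?_
                  have hvr : y.1.1 r (Fin.last m) = A r (Fin.last m) := congrFun hveq r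
                  rw [hvr]
                | succ s' =>
                  rw [hBs s', hAs s', hs s' (Fin.succ_lt_succ_iff.1 hs')]
              · rw [hBs t', hAs t']
                exact hlt
        rw [hstep]
        have hcp := card_pair_or (α := Fin k → F)
          (β := {Bp : (Fin k → Fin m → F) × (Fin k → Fin m) // IsRREFPiv Bp.1 Bp.2})
          (fun v => (∑ r : Fin k, (e (v r) : ℕ) * q ^ (k - 1 - (r : ℕ))) <
            (∑ r : Fin k, (e (A r (Fin.last m)) : ℕ) * q ^ (k - 1 - (r : ℕ))))
          (fun z => LtA q e A'' piv'' z.1)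
          (fun r => A r (Fin.last m)) (lt_irrefl _)
        rw [hcp, card_dval_lt e k _ (le_of_lt (dval_lt e k _)), card_rref_eq_gauss F m k]
        congr 1
        exact Nat.card_congr (Equiv.subtypeSubtypeEquivSubtypeInter _ _)
      rw [hpart2, ih k A'' piv'' hA'']
      -- match with the right-hand side
      rw [Fin.sum_univ_succ]
      have hterm0 : (pivInd piv 0 * q ^ (k - wPrefix piv 0) +
          (1 - pivInd piv 0) *
            ((∑ r : Fin k, (e (A r (0 : Fin (m+1)).rev) : ℕ) * q ^ (k - 1 - (r : ℕ))) /
              q ^ wPrefix piv 0)) *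
          gaussNum F (m + 1 - 1 - ((0 : Fin (m+1)) : ℕ)) (k - wPrefix piv 0) =
          (∑ r : Fin k, (e (A r (Fin.last m)) : ℕ) * q ^ (k - 1 - (r : ℕ))) * gaussNum F m k := by
        rw [pivInd_zero_nopiv hex, wPrefix_zero', Fin.rev_zero]
        norm_num
      rw [hterm0]
      congr 1
      refine Finset.sum_congr rfl fun j _ => ?_
      have hpivInd : ∀ ℓ : Fin m, pivInd piv ℓ.succ = pivInd piv'' ℓ :=
        fun ℓ => pivInd_succ_dropCol hpiv''eq ℓ
      have hw : wPrefix piv j.succ = wPrefix piv'' j := by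
        rw [wPrefix_succ piv piv'' hpivInd j, pivInd_zero_nopiv hex, zero_add]
      have hdig : (∑ r : Fin k, (e (A r j.succ.rev) : ℕ) * q ^ (k - 1 - (r : ℕ))) =
          ∑ r : Fin k, (e (A'' r j.rev) : ℕ) * q ^ (k - 1 - (r : ℕ)) := by
        refine Finset.sum_congr rfl fun r _ => ?_
        rw [Fin.rev_succ]
        rfl
      have hgind : m + 1 - 1 - ((j.succ : Fin (m+1)) : ℕ) = m - 1 - (j : ℕ) := by
        rw [Fin.val_succ]; omega
      rw [hpivInd j, hw, hdig, hgind]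

/-! ### Transfer from subspaces to matrices -/

set_option maxHeartbeats 1000000 in
theorem card_transfer (F : Type) [Field F] [Fintype F] {q : ℕ} (e : F ≃ Fin q)
    (n k : ℕ) (X : Submodule F (Fin n → F)) (A : Fin k → Fin n → F)
    (piv : Fin k → Fin n) (hA : GeneratesRREF A piv X) :
    Nat.card {Y : Submodule F (Fin n → F) //
        Module.finrank F Y = k ∧ extLt q e n k Y X} =
      Nat.card {Bp : (Fin k → Fin n → F) × (Fin k → Fin n) //
        IsRREFPiv Bp.1 Bp.2 ∧ LtA q e A piv Bp} := by
  symm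
  have hfr : ∀ x : {Bp : (Fin k → Fin n → F) × (Fin k → Fin n) //
      IsRREFPiv Bp.1 Bp.2 ∧ LtA q e A piv Bp},
      Module.finrank F (Submodule.span F (Set.range x.1.1)) = k := by
    intro x
    have h2 : LinearIndependent F x.1.1 := li x.2.1
    rw [finrank_span_eq_card h2, Fintype.card_fin]
  have hlt : ∀ x : {Bp : (Fin k → Fin n → F) × (Fin k → Fin n) //
      IsRREFPiv Bp.1 Bp.2 ∧ LtA q e A piv Bp},
      extLt q e n k (Submodule.span F (Set.range x.1.1)) X := by
    intro x
    exact ⟨x.1.1, x.1.2, A, piv, ⟨x.2.1, li x.2.1, rfl⟩, hA, x.2.2⟩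
  refine Nat.card_eq_of_bijective
    (α := {Bp : (Fin k → Fin n → F) × (Fin k → Fin n) //
        IsRREFPiv Bp.1 Bp.2 ∧ LtA q e A piv Bp})
    (β := {Y : Submodule F (Fin n → F) // Module.finrank F Y = k ∧ extLt q e n k Y X})
    (fun x => ⟨Submodule.span F (Set.range x.1.1), hfr x, hlt x⟩) ?_
  constructor
  · intro x y hxy
    have hsp : Submodule.span F (Set.range x.1.1) = Submodule.span F (Set.range y.1.1) :=
      congrArg Subtype.val hxy
    obtain ⟨hAB, hpq⟩ := rref_unique x.2.1 y.2.1 hsp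
    exact Subtype.ext (Prod.ext hAB hpq)
  · rintro ⟨Y, hfin, B', pivB', A2, pivA2, hGB, hGA, t, hs, hlt2⟩
    have hAeq : A2 = A ∧ pivA2 = piv := by
      refine rref_unique hGA.1 hA.1 ?_
      rw [hGA.2.2, hA.2.2]
    obtain ⟨rfl, rfl⟩ := hAeq
    exact ⟨⟨(B', pivB'), hGB.1, ⟨t, hs, hlt2⟩⟩, Subtype.ext hGB.2.2⟩

end RREFAux

/-- **The enumerative-encoding formula for the extended representation (`Ind_2`).**
Let `q` be a prime power, `F` a field with `q` elements whose elements are identified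
with `{0,…,q-1}` via `e` (with `0 ↦ 0`, `1 ↦ 1`), `0 ≤ k ≤ n`, and let `X` be a
`k`-dimensional subspace of `F^n` with RREF generator matrix `A` and pivots `piv`.
Then the number of `k`-dimensional subspaces `Y` with `Y < X` in the
extended-representation lexicographic order equals
`∑_{j=1}^n (v_j q^{k-w_{j-1}} + (1-v_j) {X_j}/q^{w_{j-1}}) [n-j choose k-w_{j-1}]_q`,
where `v_j` is the identifying-vector bit at column `j` (from the right),
`w_{j-1}` is the weight of the rightmost `j-1` bits, and `{X_j}` is the integer with
base-`q` digits the entries of column `j` of `A` (row `1` most significant). -/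


theorem stmt_12 (q n k : ℕ) (hq : IsPrimePow q) (F : Type) [Field F] [Fintype F]
    (hF : Fintype.card F = q) (hkn : k ≤ n)
    (e : F ≃ Fin q) (he0 : (e 0 : ℕ) = 0) (he1 : (e 1 : ℕ) = 1)
    (X : Submodule F (Fin n → F)) (A : Fin k → Fin n → F) (piv : Fin k → Fin n)
    (hA : GeneratesRREF A piv X) :
    Nat.card {Y : Submodule F (Fin n → F) //
        Module.finrank F Y = k ∧ extLt q e n k Y X} =
      ∑ j : Fin n,
        (pivInd piv j * q ^ (k - wPrefix piv j) +
            (1 - pivInd piv j) *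
              ((∑ r : Fin k, (e (A r j.rev) : ℕ) * q ^ (k - 1 - (r : ℕ))) /
                q ^ wPrefix piv j)) *
          gaussNum F (n - 1 - (j : ℕ)) (k - wPrefix piv j) := by
  
  rw [RREFAux.card_transfer F e n k X A piv hA]
  exact RREFAux.count_lt F e he0 he1 n k A piv hA.1
end

section
/- Let q be a prime power and 0 ≤ k ≤ n. Let X be a k-dimensional subspace of F_q^n, let F_X be the Ferrers diagram of the echelon Ferrers form of v(X), let x = (x_1,...,x_{|F_X|}) be the entries of the Ferrers tableaux form F(X) read from right to left and top to bottom, and let {x} be the integer value of x in base q (with x_1 most significant). Then the number of k-dimensional subspaces Y of F_q^n with Y < X in the Ferrers-tableaux order equals Σ_{i=|F_X|+1}^{k(n-k)} α_i · q^i + ind_{|F_X|}(F_X) · q^{|F_X|} + {x}, where α_i = p(i, k, n-k). -/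
/-- `pBox m k η` is the number of Ferrers diagrams of size `m` fitting in a `k × η` box. -/
def pBox (m k η : ℕ) : ℕ :=
  ((ferrersBox k η).filter (fun c => ∑ i, (c i : ℕ) = m)).card

/-- `c` enumerates the non-pivot positions in strictly decreasing order:
`c i` is the `(i+1)`-th non-pivot column position counted from the right. -/
def NPEnum {n k : ℕ} (piv : Fin k → Fin n) (c : Fin (n - k) → Fin n) : Prop :=
  (∀ i i' : Fin (n - k), i < i' → c i' < c i) ∧
    (∀ p : Fin n, (∃ i, c i = p) ↔ ¬∃ r, piv r = p)

/-- The number of dots in the `(i+1)`-th column (from the right) of the Ferrers diagram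
of the echelon Ferrers form: the number of rows whose pivot lies strictly to the left
of the `(i+1)`-th non-pivot position from the right. -/
def diagCol {n k : ℕ} (piv : Fin k → Fin n) (c : Fin (n - k) → Fin n)
    (i : Fin (n - k)) : ℕ :=
  (Finset.univ.filter (fun t : Fin k => piv t < c i)).card

/-- `|F_X|`: the total number of dots of the Ferrers diagram. -/
def diagSize {n k : ℕ} (piv : Fin k → Fin n) (c : Fin (n - k) → Fin n) : ℕ :=
  ∑ i, diagCol piv c i

/-- The number of dots in row `t` of the Ferrers diagram. -/
def rowdots {n k : ℕ} (piv : Fin k → Fin n) (c : Fin (n - k) → Fin n) (t : Fin k) : ℕ :=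
  (Finset.univ.filter (fun i : Fin (n - k) => piv t < c i)).card

/-- The number of dots in the rows strictly above row `t`. -/
def rowPrefix {n k : ℕ} (piv : Fin k → Fin n) (c : Fin (n - k) → Fin n) (t : Fin k) : ℕ :=
  ∑ s ∈ Finset.univ.filter (fun s : Fin k => s < t), rowdots piv c s

/-- The position (1-based, counted from the right) of the dot in row `t`, column `c i`,
among the dots of row `t`. -/
def posInRow {n k : ℕ} (piv : Fin k → Fin n) (c : Fin (n - k) → Fin n) (t : Fin k)
    (i : Fin (n - k)) : ℕ :=
  (Finset.univ.filter (fun i' : Fin (n - k) => i' ≤ i ∧ piv t < c i')).card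

/-- `{x}`: the integer whose base-`q` digits are the entries of the Ferrers tableaux
form (the RREF entries in the dots of the Ferrers diagram), read from right to left
and top to bottom, the first entry being the most significant digit; elements of `F`
are identified with `{0,…,q-1}` via `e`. -/
def xVal (q : ℕ) {F : Type} [Field F] (e : F ≃ Fin q) {n k : ℕ}
    (A : Fin k → Fin n → F) (piv : Fin k → Fin n) (c : Fin (n - k) → Fin n) : ℕ :=
  ∑ t : Fin k, ∑ i : Fin (n - k),
    if piv t < c i then
      (e (A t (c i)) : ℕ) *
        q ^ (diagSize piv c - rowPrefix piv c t - posInRow piv c t i)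
    else 0

/-- `ind_{|F_X|}(F_X)`: the number of Ferrers diagrams of size `|F_X|` in the
`k × (n-k)` box which strictly precede the diagram of `X` (a diagram precedes
another iff it has more dots at the least column, from the right, where they differ). -/
def diagInd {n k : ℕ} (piv : Fin k → Fin n) (c : Fin (n - k) → Fin n) : ℕ :=
  ((ferrersBox k (n - k)).filter
    (fun G : Fin (n - k) → Fin (k + 1) =>
      (∑ i, (G i : ℕ)) = diagSize piv c ∧
        ∃ i, (∀ t, t < i → (G t : ℕ) = diagCol piv c t) ∧ diagCol piv c i < (G i : ℕ))).card

/-- `X < Y` in the Ferrers-tableaux order: either `|F_X| > |F_Y|`, or the diagrams have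
equal size and `ind(F_X) < ind(F_Y)`, or the diagrams coincide and the entry vector of
the Ferrers tableaux form of `X` is lexicographically smaller than that of `Y`
(equivalently, has a smaller base-`q` value `{x}`). -/
def ftLt (q : ℕ) {F : Type} [Field F] (e : F ≃ Fin q) (n k : ℕ)
    (X Y : Submodule F (Fin n → F)) : Prop :=
  ∃ (A : Fin k → Fin n → F) (pivA : Fin k → Fin n) (cA : Fin (n - k) → Fin n)
    (B : Fin k → Fin n → F) (pivB : Fin k → Fin n) (cB : Fin (n - k) → Fin n),
    GeneratesRREF A pivA X ∧ NPEnum pivA cA ∧ GeneratesRREF B pivB Y ∧ NPEnum pivB cB ∧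
      (diagSize pivB cB < diagSize pivA cA ∨
        (diagSize pivA cA = diagSize pivB cB ∧ diagInd pivA cA < diagInd pivB cB) ∨
        ((∀ i, diagCol pivA cA i = diagCol pivB cB i) ∧
          xVal q e A pivA cA < xVal q e B pivB cB))

open Finset

section Enum
variable {n k : ℕ}

lemma strictMono_eq_of_range {m N : ℕ} {f g : Fin m → Fin N} (hf : StrictMono f)
    (hg : StrictMono g) (h : ∀ p, (∃ i, f i = p) ↔ (∃ i, g i = p)) : f = g := by
  set s : Finset (Fin N) := Finset.image f Finset.univ with hs
  have hcard : s.card = m := by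
    rw [hs, Finset.card_image_of_injective _ hf.injective, Finset.card_univ, Fintype.card_fin]
  have h1 : f = s.orderEmbOfFin hcard :=
    Finset.orderEmbOfFin_unique hcard (fun x => Finset.mem_image_of_mem f (Finset.mem_univ x)) hf
  have h2 : g = s.orderEmbOfFin hcard := by
    refine Finset.orderEmbOfFin_unique hcard (fun x => ?_) hg
    rw [hs]
    simp only [Finset.mem_image, Finset.mem_univ, true_and]
    exact (h (g x)).2 ⟨x, rfl⟩
  rw [h1, h2]

lemma NPEnum.strictAnti' {piv : Fin k → Fin n} {c : Fin (n - k) → Fin n}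
    (hc : NPEnum piv c) : ∀ i i', i < i' → c i' < c i := hc.1

lemma NPEnum.injective {piv : Fin k → Fin n} {c : Fin (n - k) → Fin n}
    (hc : NPEnum piv c) : Function.Injective c := by
  intro i j hij
  by_contra hne
  rcases lt_or_gt_of_ne hne with h | h
  · exact absurd hij (hc.1 i j h).ne'
  · exact absurd hij (hc.1 j i h).ne

lemma NPEnum.lt_iff {piv : Fin k → Fin n} {c : Fin (n - k) → Fin n}
    (hc : NPEnum piv c) {i j : Fin (n - k)} : c j < c i ↔ i < j := by
  constructor
  · intro h
    by_contra hle
    push_neg at hle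
    rcases eq_or_lt_of_le hle with rfl | hlt
    · exact lt_irrefl _ h
    · exact absurd (hc.1 j i hlt) (not_lt.2 h.le)
  · exact hc.1 i j

lemma NPEnum.unique {piv : Fin k → Fin n} {c c' : Fin (n - k) → Fin n}
    (hc : NPEnum piv c) (hc' : NPEnum piv c') : c = c' := by
  have hrev : ∀ (d : Fin (n - k) → Fin n), NPEnum piv d →
      StrictMono (fun i => d (Fin.rev i)) := by
    intro d hd i j hij
    exact hd.1 _ _ (Fin.rev_lt_rev.2 hij)
  have h := strictMono_eq_of_range (hrev c hc) (hrev c' hc') (fun p => by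
    constructor
    · rintro ⟨i, hi⟩
      have : ∃ i, c' i = p := (hc'.2 p).2 ((hc.2 p).1 ⟨_, hi⟩)
      rcases this with ⟨j, hj⟩
      exact ⟨Fin.rev j, by simpa using hj⟩
    · rintro ⟨i, hi⟩
      have : ∃ i, c i = p := (hc.2 p).2 ((hc'.2 p).1 ⟨_, hi⟩)
      rcases this with ⟨j, hj⟩
      exact ⟨Fin.rev j, by simpa using hj⟩)
  funext i
  have := congrFun h (Fin.rev i)
  simpa using this

lemma npe_exists {piv : Fin k → Fin n} (hpiv : Function.Injective piv) :
    ∃ c, NPEnum piv c := by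
  classical
  set s : Finset (Fin n) := Finset.univ \ Finset.image piv Finset.univ with hs
  have hcard : s.card = n - k := by
    rw [hs, Finset.card_sdiff_of_subset (Finset.subset_univ _), Finset.card_univ, Fintype.card_fin,
      Finset.card_image_of_injective _ hpiv, Finset.card_univ, Fintype.card_fin]
  refine ⟨fun i => s.orderEmbOfFin hcard (Fin.rev i), ?_, ?_⟩
  · intro i i' h
    exact (s.orderEmbOfFin hcard).strictMono (Fin.rev_lt_rev.2 h)
  · intro p
    constructor
    · rintro ⟨i, rfl⟩
      have hmem : s.orderEmbOfFin hcard (Fin.rev i) ∈ s := s.orderEmbOfFin_mem hcard _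
      have hmem2 := (Finset.mem_sdiff.1 hmem).2
      rintro ⟨r, hr⟩
      exact hmem2 (Finset.mem_image.2 ⟨r, Finset.mem_univ r, hr⟩)
    · intro hp
      have hmem : p ∈ s := by
        refine Finset.mem_sdiff.2 ⟨Finset.mem_univ p, ?_⟩
        intro hmemi
        rcases Finset.mem_image.1 hmemi with ⟨r, _, hr⟩
        exact hp ⟨r, hr⟩
      have := (Finset.range_orderEmbOfFin s hcard)
      have hp' : p ∈ Set.range (s.orderEmbOfFin hcard) := by rw [this]; exact hmem
      rcases hp' with ⟨j, hj⟩
      exact ⟨Fin.rev j, by simpa using hj⟩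

end Enum
section Formulas

open Finset

variable {n k : ℕ}

/-- Canonical enumeration of non-pivot positions. -/
noncomputable def npe {n k : ℕ} (piv : Fin k → Fin n) : Fin (n - k) → Fin n :=
  @dite _ (∃ c, NPEnum piv c) (Classical.dec _) (fun h => h.choose)
    (fun _ => fun i => Fin.castLE (Nat.sub_le n k) i)

lemma npe_spec {piv : Fin k → Fin n} (hpiv : Function.Injective piv) :
    NPEnum piv (npe piv) := by
  have h : ∃ c, NPEnum piv c := npe_exists hpiv
  rw [npe]
  rw [dif_pos h]
  exact h.choose_spec

lemma npe_eq {piv : Fin k → Fin n} {c : Fin (n - k) → Fin n} (hpiv : Function.Injective piv)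
    (hc : NPEnum piv c) : npe piv = c :=
  NPEnum.unique (npe_spec hpiv) hc

variable {piv : Fin k → Fin n} {c : Fin (n - k) → Fin n}

lemma partition_count (hpiv : Function.Injective piv) (hc : NPEnum piv c) (x : Fin n) :
    (Finset.univ.filter (fun t : Fin k => piv t < x)).card +
      (Finset.univ.filter (fun i : Fin (n - k) => c i < x)).card = (x : ℕ) := by
  classical
  have hdisj : Disjoint ((Finset.univ.filter (fun t : Fin k => piv t < x)).image piv)
      ((Finset.univ.filter (fun i : Fin (n - k) => c i < x)).image c) := by
    rw [Finset.disjoint_left]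
    rintro y hy1 hy2
    rcases Finset.mem_image.1 hy1 with ⟨t, _, rfl⟩
    rcases Finset.mem_image.1 hy2 with ⟨i, _, hi⟩
    exact ((hc.2 (piv t)).1 ⟨i, hi⟩) ⟨t, rfl⟩
  have hunion : ((Finset.univ.filter (fun t : Fin k => piv t < x)).image piv) ∪
      ((Finset.univ.filter (fun i : Fin (n - k) => c i < x)).image c) =
      Finset.univ.filter (fun y : Fin n => y < x) := by
    ext y
    simp only [Finset.mem_union, Finset.mem_image, Finset.mem_filter, Finset.mem_univ, true_and]
    constructor
    · rintro (⟨t, ht, rfl⟩ | ⟨i, hi, rfl⟩)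
      · exact ht
      · exact hi
    · intro hy
      by_cases hp : ∃ r, piv r = y
      · rcases hp with ⟨r, rfl⟩
        exact Or.inl ⟨r, hy, rfl⟩
      · rcases (hc.2 y).2 hp with ⟨i, rfl⟩
        exact Or.inr ⟨i, hy, rfl⟩
  have hcards := congrArg Finset.card hunion
  rw [Finset.card_union_of_disjoint hdisj,
    Finset.card_image_of_injective _ hpiv,
    Finset.card_image_of_injective _ hc.injective] at hcards
  rw [hcards, ← Fin.card_Iio x]
  congr 1
  ext y
  simp

lemma diagCol_add (hpiv : Function.Injective piv) (hc : NPEnum piv c) (i : Fin (n - k)) :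
    diagCol piv c i + (n - k - 1 - (i : ℕ)) = (c i : ℕ) := by
  classical
  have h := partition_count hpiv hc (c i)
  have h2 : (Finset.univ.filter (fun j : Fin (n - k) => c j < c i)).card = n - k - 1 - (i : ℕ) := by
    have : (Finset.univ.filter (fun j : Fin (n - k) => c j < c i)) = Finset.Ioi i := by
      ext j
      simp [hc.lt_iff]
    rw [this, Fin.card_Ioi]
  rw [h2] at h
  exact h

lemma diagCol_le_k (i : Fin (n - k)) : diagCol piv c i ≤ k := by
  rw [diagCol]
  calc (Finset.univ.filter (fun t : Fin k => piv t < c i)).card ≤ Finset.univ.card :=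
        Finset.card_filter_le _ _
    _ = k := by simp

lemma diagCol_anti (hc : NPEnum piv c) {i j : Fin (n - k)} (hij : i ≤ j) :
    diagCol piv c j ≤ diagCol piv c i := by
  classical
  apply Finset.card_le_card
  intro t ht
  rw [Finset.mem_filter] at ht ⊢
  refine ⟨Finset.mem_univ t, lt_of_lt_of_le ht.2 ?_⟩
  rcases eq_or_lt_of_le hij with rfl | h
  · exact le_refl _
  · exact (hc.1 i j h).le

lemma diagSize_le (piv : Fin k → Fin n) (c : Fin (n - k) → Fin n) :
    diagSize piv c ≤ k * (n - k) := by
  rw [diagSize]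
  calc ∑ i, diagCol piv c i ≤ ∑ _i : Fin (n - k), k :=
        Finset.sum_le_sum (fun i _ => diagCol_le_k i)
    _ = k * (n - k) := by simp [mul_comm]

/-- the dots, as a finset of pairs -/
def dotsF (piv : Fin k → Fin n) (c : Fin (n - k) → Fin n) : Finset (Fin k × Fin (n - k)) :=
  (Finset.univ ×ˢ Finset.univ).filter (fun p => piv p.1 < c p.2)

lemma card_dotsF : (dotsF piv c).card = diagSize piv c := by
  classical
  rw [dotsF, diagSize, Finset.card_filter, Finset.sum_product]
  rw [Finset.sum_comm]
  simp only [diagCol, Finset.card_filter]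

lemma diagSize_eq_sum_rowdots : diagSize piv c = ∑ t, rowdots piv c t := by
  classical
  simp only [diagSize, diagCol, rowdots, Finset.card_filter]
  exact Finset.sum_comm

end Formulas
section Dots

open Finset

variable {n k : ℕ} {piv : Fin k → Fin n} {c : Fin (n - k) → Fin n}

lemma posInRow_le_rowdots (t : Fin k) (i : Fin (n - k)) :
    posInRow piv c t i ≤ rowdots piv c t := by
  apply Finset.card_le_card
  intro j hj
  rw [Finset.mem_filter] at hj ⊢
  exact ⟨Finset.mem_univ j, hj.2.2⟩

lemma posInRow_pos {t : Fin k} {i : Fin (n - k)} (h : piv t < c i) :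
    1 ≤ posInRow piv c t i := by
  rw [posInRow, Nat.succ_le_iff]
  refine Finset.card_pos.2 ⟨i, ?_⟩
  rw [Finset.mem_filter]
  exact ⟨Finset.mem_univ i, le_refl i, h⟩

lemma posInRow_strictMono {t : Fin k} {i i' : Fin (n - k)} (hi' : piv t < c i')
    (hii' : i < i') : posInRow piv c t i < posInRow piv c t i' := by
  apply Finset.card_lt_card
  rw [Finset.ssubset_iff_of_subset]
  · exact ⟨i', Finset.mem_filter.2 ⟨Finset.mem_univ _, le_refl _, hi'⟩,
      fun hmem => absurd ((Finset.mem_filter.1 hmem).2.1) (not_le.2 hii')⟩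
  · intro j hj
    rw [Finset.mem_filter] at hj ⊢
    exact ⟨hj.1, hj.2.1.trans hii'.le, hj.2.2⟩

lemma rowPrefix_add_rowdots_le (t : Fin k) :
    rowPrefix piv c t + rowdots piv c t ≤ diagSize piv c := by
  classical
  rw [diagSize_eq_sum_rowdots (piv := piv) (c := c), rowPrefix]
  have ht : t ∉ Finset.univ.filter (fun s : Fin k => s < t) := by simp
  have : rowPrefix piv c t + rowdots piv c t =
      ∑ s ∈ insert t (Finset.univ.filter (fun s : Fin k => s < t)), rowdots piv c s := by
    rw [Finset.sum_insert ht, add_comm, rowPrefix]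
  rw [rowPrefix] at this
  rw [this]
  apply Finset.sum_le_sum_of_subset
  intro s _
  exact Finset.mem_univ s

lemma rowPrefix_add_le_rowPrefix {t t' : Fin k} (h : t < t') :
    rowPrefix piv c t + rowdots piv c t ≤ rowPrefix piv c t' := by
  classical
  have ht : t ∉ Finset.univ.filter (fun s : Fin k => s < t) := by simp
  have h1 : rowPrefix piv c t + rowdots piv c t =
      ∑ s ∈ insert t (Finset.univ.filter (fun s : Fin k => s < t)), rowdots piv c s := by
    rw [Finset.sum_insert ht, add_comm, rowPrefix]
  rw [h1, rowPrefix]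
  apply Finset.sum_le_sum_of_subset
  intro s hs
  rcases Finset.mem_insert.1 hs with rfl | hs'
  · exact Finset.mem_filter.2 ⟨Finset.mem_univ _, h⟩
  · rw [Finset.mem_filter] at hs' ⊢
    exact ⟨hs'.1, hs'.2.trans h⟩

/-- the (1-based) reading position of a dot -/
def dotPos (piv : Fin k → Fin n) (c : Fin (n - k) → Fin n) (p : Fin k × Fin (n - k)) : ℕ :=
  rowPrefix piv c p.1 + posInRow piv c p.1 p.2

lemma dotPos_pos {p : Fin k × Fin (n - k)} (hp : p ∈ dotsF piv c) : 1 ≤ dotPos piv c p := by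
  have := posInRow_pos (t := p.1) (i := p.2) (Finset.mem_filter.1 hp).2
  rw [dotPos]
  omega

lemma dotPos_le {p : Fin k × Fin (n - k)} (hp : p ∈ dotsF piv c) :
    dotPos piv c p ≤ diagSize piv c := by
  have h1 := posInRow_le_rowdots (piv := piv) (c := c) p.1 p.2
  have h2 := rowPrefix_add_rowdots_le (piv := piv) (c := c) p.1
  rw [dotPos]
  omega

lemma dotPos_injOn {p p' : Fin k × Fin (n - k)} (hp : p ∈ dotsF piv c)
    (hp' : p' ∈ dotsF piv c) (h : dotPos piv c p = dotPos piv c p') : p = p' := by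
  obtain ⟨t, i⟩ := p
  obtain ⟨t', i'⟩ := p'
  have hd : piv t < c i := (Finset.mem_filter.1 hp).2
  have hd' : piv t' < c i' := (Finset.mem_filter.1 hp').2
  rw [dotPos, dotPos] at h
  simp only at h hd hd'
  have htt' : t = t' := by
    by_contra hne
    rcases lt_or_gt_of_ne hne with hlt | hlt
    · have b1 : rowPrefix piv c t + posInRow piv c t i ≤ rowPrefix piv c t' :=
        le_trans (by have := posInRow_le_rowdots (piv := piv) (c := c) t i; omega)
          (rowPrefix_add_le_rowPrefix hlt)
      have b2 := posInRow_pos (piv := piv) (c := c) hd'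
      omega
    · have b1 : rowPrefix piv c t' + posInRow piv c t' i' ≤ rowPrefix piv c t :=
        le_trans (by have := posInRow_le_rowdots (piv := piv) (c := c) t' i'; omega)
          (rowPrefix_add_le_rowPrefix hlt)
      have b2 := posInRow_pos (piv := piv) (c := c) hd
      omega
  subst htt'
  have hii' : i = i' := by
    by_contra hne
    rcases lt_or_gt_of_ne hne with hlt | hlt
    · exact absurd (by omega : posInRow piv c t i = posInRow piv c t i')
        (posInRow_strictMono hd' hlt).ne
    · exact absurd (by omega : posInRow piv c t i' = posInRow piv c t i)
        (posInRow_strictMono hd hlt).ne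
  rw [hii']

/-- the exponent of a dot: `m - position` -/
def dexp (piv : Fin k → Fin n) (c : Fin (n - k) → Fin n)
    (d : {p : Fin k × Fin (n - k) // p ∈ dotsF piv c}) : Fin (diagSize piv c) :=
  ⟨diagSize piv c - dotPos piv c d.1, by
    have h1 := dotPos_pos d.2
    have h2 := dotPos_le d.2
    omega⟩

lemma dexp_bijective (piv : Fin k → Fin n) (c : Fin (n - k) → Fin n) :
    Function.Bijective (dexp piv c) := by
  classical
  rw [Fintype.bijective_iff_injective_and_card]
  constructor
  · intro d d' h
    have h1 := dotPos_pos d.2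
    have h2 := dotPos_le d.2
    have h1' := dotPos_pos d'.2
    have h2' := dotPos_le d'.2
    have := congrArg Fin.val h
    simp only [dexp] at this
    exact Subtype.ext (dotPos_injOn d.2 d'.2 (by omega))
  · rw [Fintype.card_coe, card_dotsF, Fintype.card_fin]

/-- the dots/exponents equivalence -/
noncomputable def dexpEquiv (piv : Fin k → Fin n) (c : Fin (n - k) → Fin n) :
    {p : Fin k × Fin (n - k) // p ∈ dotsF piv c} ≃ Fin (diagSize piv c) :=
  Equiv.ofBijective _ (dexp_bijective piv c)

lemma dexpEquiv_apply (piv : Fin k → Fin n) (c : Fin (n - k) → Fin n)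
    (d : {p : Fin k × Fin (n - k) // p ∈ dotsF piv c}) :
    ((dexpEquiv piv c d : Fin (diagSize piv c)) : ℕ) =
      diagSize piv c - rowPrefix piv c d.1.1 - posInRow piv c d.1.1 d.1.2 := by
  show ((dexp piv c d : Fin (diagSize piv c)) : ℕ) = _
  simp only [dexp, dotPos]
  omega

end Dots
section Fill

open Finset

variable {q n k : ℕ} {F : Type} [Field F]
variable {piv : Fin k → Fin n} {c : Fin (n - k) → Fin n}

/-- the matrix built from a filling of the dots -/
noncomputable def matOf (piv : Fin k → Fin n) (c : Fin (n - k) → Fin n)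
    (f : {p : Fin k × Fin (n - k) // p ∈ dotsF piv c} → F) : Fin k → Fin n → F :=
  fun t p =>
    if hp : ∃ i, c i = p then
      if hd : piv t < p then
        f ⟨(t, hp.choose), by
          refine Finset.mem_filter.2 ⟨Finset.mem_product.2 ⟨Finset.mem_univ _, Finset.mem_univ _⟩, ?_⟩
          show piv t < c hp.choose
          rw [hp.choose_spec]
          exact hd⟩
      else 0
    else if p = piv t then 1 else 0

/-- the filling extracted from a matrix -/
def fillOf (c : Fin (n - k) → Fin n) (A : Fin k → Fin n → F)
    (d : {p : Fin k × Fin (n - k) // p ∈ dotsF piv c}) : F :=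
  A d.1.1 (c d.1.2)

lemma matOf_isRREF (hpiv : StrictMono piv) (hc : NPEnum piv c)
    (f : {p : Fin k × Fin (n - k) // p ∈ dotsF piv c} → F) :
    IsRREFPiv (matOf piv c f) piv := by
  refine ⟨hpiv, ?_, ?_, ?_⟩
  · intro t
    have hnp : ¬∃ i, c i = piv t := by
      intro h
      exact (hc.2 (piv t)).1 h ⟨t, rfl⟩
    rw [matOf, dif_neg hnp, if_pos rfl]
  · intro t j hj
    by_cases hp : ∃ i, c i = j
    · rw [matOf, dif_pos hp, dif_neg (not_lt.2 hj.le)]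
    · rw [matOf, dif_neg hp, if_neg (by intro h; exact absurd hj (by rw [h]; exact lt_irrefl _))]
  · intro t t' htt'
    have hnp : ¬∃ i, c i = piv t := by
      intro h
      exact (hc.2 (piv t)).1 h ⟨t, rfl⟩
    rw [matOf, dif_neg hnp, if_neg (fun h => htt' (hpiv.injective h).symm)]

lemma matOf_fillOf (hpiv : StrictMono piv) (hc : NPEnum piv c) {A : Fin k → Fin n → F}
    (hA : IsRREFPiv A piv) : matOf piv c (fillOf c A) = A := by
  funext t p
  by_cases hp : ∃ i, c i = p
  · by_cases hd : piv t < p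
    · rw [matOf, dif_pos hp, dif_pos hd, fillOf]
      simp only
      rw [hp.choose_spec]
    · rw [matOf, dif_pos hp, dif_neg hd]
      have hne : p ≠ piv t := by
        intro h
        exact (hc.2 p).1 hp ⟨t, h.symm⟩
      have : p < piv t := lt_of_le_of_ne (not_lt.1 hd) hne
      exact (hA.2.2.1 t p this).symm
  · have hex : ∃ r, piv r = p := by
      by_contra h
      exact hp ((hc.2 p).2 h)
    rcases hex with ⟨r, rfl⟩
    by_cases htr : piv r = piv t
    · rw [matOf, dif_neg hp, if_pos htr]
      have : r = t := hpiv.injective htr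
      subst this
      exact (hA.2.1 r).symm
    · rw [matOf, dif_neg hp, if_neg htr]
      have : t ≠ r := fun h => htr (by rw [h])
      exact (hA.2.2.2 r t this).symm

lemma fillOf_matOf (hc : NPEnum piv c)
    (f : {p : Fin k × Fin (n - k) // p ∈ dotsF piv c} → F) :
    fillOf c (matOf piv c f) = f := by
  funext d
  obtain ⟨⟨t, i⟩, hd⟩ := d
  have hdot : piv t < c i := (Finset.mem_filter.1 hd).2
  have hp : ∃ i', c i' = c i := ⟨i, rfl⟩
  rw [fillOf]
  simp only
  rw [matOf, dif_pos hp, dif_pos hdot]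
  congr 1
  apply Subtype.ext
  simp only
  have : hp.choose = i := hc.injective hp.choose_spec
  rw [this]

/-- RREF matrices with pivots `piv` correspond to fillings of the dots -/
noncomputable def rrefEquiv (hpiv : StrictMono piv) (hc : NPEnum piv c) :
    {A : Fin k → Fin n → F // IsRREFPiv A piv} ≃
      ({p : Fin k × Fin (n - k) // p ∈ dotsF piv c} → F) where
  toFun A := fillOf c A.1
  invFun f := ⟨matOf piv c f, matOf_isRREF hpiv hc f⟩
  left_inv A := Subtype.ext (matOf_fillOf hpiv hc A.2)
  right_inv f := fillOf_matOf hc f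

/-- RREF matrices with pivots `piv` correspond to numbers `< q ^ m` -/
noncomputable def numEquiv (e : F ≃ Fin q) (hpiv : StrictMono piv) (hc : NPEnum piv c) :
    {A : Fin k → Fin n → F // IsRREFPiv A piv} ≃ Fin (q ^ diagSize piv c) :=
  (rrefEquiv hpiv hc).trans
    ((Equiv.arrowCongr (Equiv.refl _) e).trans
      ((Equiv.arrowCongr (dexpEquiv piv c) (Equiv.refl _)).trans finFunctionFinEquiv))

lemma xVal_eq_sum (e : F ≃ Fin q) (A : Fin k → Fin n → F) :
    xVal q e A piv c =
      ∑ d : {p : Fin k × Fin (n - k) // p ∈ dotsF piv c},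
        (e (A d.1.1 (c d.1.2)) : ℕ) * q ^ ((dexpEquiv piv c d : Fin (diagSize piv c)) : ℕ) := by
  classical
  rw [xVal, ← Finset.sum_product', ← Finset.sum_filter]
  simp_rw [dexpEquiv_apply]
  exact (Finset.sum_coe_sort (dotsF piv c)
    (fun p => (e (A p.1 (c p.2)) : ℕ) *
      q ^ (diagSize piv c - rowPrefix piv c p.1 - posInRow piv c p.1 p.2))).symm

lemma numEquiv_val (e : F ≃ Fin q) (hpiv : StrictMono piv) (hc : NPEnum piv c)
    (A : {A : Fin k → Fin n → F // IsRREFPiv A piv}) :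
    ((numEquiv e hpiv hc A : Fin (q ^ diagSize piv c)) : ℕ) = xVal q e A.1 piv c := by
  classical
  rw [xVal_eq_sum]
  rw [show ((numEquiv e hpiv hc A : Fin (q ^ diagSize piv c)) : ℕ) =
      ∑ j : Fin (diagSize piv c),
        ((e (fillOf c A.1 ((dexpEquiv piv c).symm j)) : Fin q) : ℕ) * q ^ (j : ℕ) from by
    rw [numEquiv]
    simp only [Equiv.trans_apply, Equiv.arrowCongr_apply, Equiv.refl_symm, Equiv.coe_refl]
    rw [finFunctionFinEquiv_apply]
    rfl]
  rw [← Equiv.sum_comp (dexpEquiv piv c)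
    (fun j => ((e (fillOf c A.1 ((dexpEquiv piv c).symm j)) : Fin q) : ℕ) * q ^ (j : ℕ))]
  apply Finset.sum_congr rfl
  intro d _
  rw [Equiv.symm_apply_apply]
  rfl

end Fill
section Count1

open Finset

variable {q n k : ℕ} {F : Type} [Field F] [Fintype F]
variable {piv : Fin k → Fin n} {c : Fin (n - k) → Fin n}

lemma card_rref (e : F ≃ Fin q) (hpiv : StrictMono piv) (hc : NPEnum piv c) :
    Nat.card {A : Fin k → Fin n → F // IsRREFPiv A piv} = q ^ diagSize piv c := by
  rw [Nat.card_congr (numEquiv e hpiv hc), Nat.card_eq_fintype_card, Fintype.card_fin]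

lemma card_rref_lt (e : F ≃ Fin q) (hpiv : StrictMono piv) (hc : NPEnum piv c)
    {A0 : Fin k → Fin n → F} (hA0 : IsRREFPiv A0 piv) :
    Nat.card {A : Fin k → Fin n → F //
        IsRREFPiv A piv ∧ xVal q e A piv c < xVal q e A0 piv c} = xVal q e A0 piv c := by
  classical
  set V := xVal q e A0 piv c with hV
  set v0 : Fin (q ^ diagSize piv c) := numEquiv e hpiv hc ⟨A0, hA0⟩ with hv0
  have hval : (v0 : ℕ) = V := numEquiv_val e hpiv hc ⟨A0, hA0⟩
  have e1 : {A : Fin k → Fin n → F // IsRREFPiv A piv ∧ xVal q e A piv c < V} ≃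
      {d : {A : Fin k → Fin n → F // IsRREFPiv A piv} // xVal q e d.1 piv c < V} :=
    (Equiv.subtypeSubtypeEquivSubtypeInter _ _).symm
  have e2 : {d : {A : Fin k → Fin n → F // IsRREFPiv A piv} // xVal q e d.1 piv c < V} ≃
      {x : Fin (q ^ diagSize piv c) // (x : ℕ) < V} :=
    Equiv.subtypeEquiv (numEquiv e hpiv hc) (fun d => by rw [numEquiv_val e hpiv hc d])
  rw [Nat.card_congr (e1.trans e2), Nat.card_eq_fintype_card, Fintype.card_subtype]
  have : (Finset.univ.filter fun x : Fin (q ^ diagSize piv c) => (x : ℕ) < V) =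
      Finset.Iio v0 := by
    ext x
    simp [Fin.lt_def, hval]
  rw [this, Fin.card_Iio, hval]

end Count1

section LinAlg

open Finset

variable {n k : ℕ} {F : Type} [Field F]
variable {piv piv' : Fin k → Fin n} {A B : Fin k → Fin n → F}

lemma rref_eval_pivot (hA : IsRREFPiv A piv) (g : Fin k → F) (t : Fin k) :
    (∑ i, g i • A i) (piv t) = g t := by
  rw [Finset.sum_apply]
  simp only [Pi.smul_apply, smul_eq_mul]
  rw [Fintype.sum_eq_single t (fun s hs => by rw [hA.2.2.2 t s hs, mul_zero])]
  rw [hA.2.1 t, mul_one]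

lemma rref_linearIndependent (hA : IsRREFPiv A piv) : LinearIndependent F A := by
  rw [Fintype.linearIndependent_iff]
  intro g hg t
  have := congrFun hg (piv t)
  rwa [rref_eval_pivot hA g t] at this

lemma rref_repr (hA : IsRREFPiv A piv) {y : Fin n → F}
    (hy : y ∈ Submodule.span F (Set.range A)) : y = ∑ t, y (piv t) • A t := by
  rcases (Submodule.mem_span_range_iff_exists_fun F).1 hy with ⟨g, hg⟩
  have hcoef : ∀ t, y (piv t) = g t := by
    intro t
    rw [← hg, rref_eval_pivot hA g t]
  simp_rw [hcoef]
  exact hg.symm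

lemma rref_piv_unique (hA : IsRREFPiv A piv) (hB : IsRREFPiv B piv')
    (hspan : Submodule.span F (Set.range A) = Submodule.span F (Set.range B)) :
    piv = piv' := by
  classical
  have key : ∀ (C : Fin k → Fin n → F) (pv : Fin k → Fin n), IsRREFPiv C pv →
      ∀ p : Fin n, (∃ t, pv t = p) ↔
        ∃ y ∈ Submodule.span F (Set.range C), y p ≠ 0 ∧ ∀ j, j < p → y j = 0 := by
    intro C pv hC p
    constructor
    · rintro ⟨t, rfl⟩
      refine ⟨C t, Submodule.subset_span ⟨t, rfl⟩, ?_, ?_⟩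
      · rw [hC.2.1 t]; exact one_ne_zero
      · intro j hj
        exact hC.2.2.1 t j hj
    · rintro ⟨y, hy, hyp, hyl⟩
      have hrep := rref_repr hC hy
      set s : Finset (Fin k) := Finset.univ.filter (fun t => y (pv t) ≠ 0) with hs
      have hsne : s.Nonempty := by
        by_contra hemp
        rw [Finset.not_nonempty_iff_eq_empty] at hemp
        have : y = 0 := by
          rw [hrep]
          apply Finset.sum_eq_zero
          intro t _
          have : y (pv t) = 0 := by
            by_contra hne
            have : t ∈ s := Finset.mem_filter.2 ⟨Finset.mem_univ t, hne⟩
            rw [hemp] at this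
            exact absurd this (Finset.notMem_empty t)
          rw [this, zero_smul]
        rw [this] at hyp
        exact hyp rfl
      set t0 := s.min' hsne with ht0
      have ht0s : t0 ∈ s := s.min'_mem hsne
      have hy0 : y (pv t0) ≠ 0 := (Finset.mem_filter.1 ht0s).2
      have hnlt : ¬pv t0 < p := fun h => hy0 (hyl _ h)
      have hngt : ¬p < pv t0 := by
        intro h
        apply hyp
        rw [hrep, Finset.sum_apply]
        apply Finset.sum_eq_zero
        intro t _
        simp only [Pi.smul_apply, smul_eq_mul]
        by_cases hts : t ∈ s
        · have : t0 ≤ t := s.min'_le t hts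
          have hpv : p < pv t := lt_of_lt_of_le h (by
            rcases eq_or_lt_of_le this with rfl | hlt
            · exact le_refl _
            · exact (hC.1 hlt).le)
          rw [hC.2.2.1 t p hpv, mul_zero]
        · have : y (pv t) = 0 := by
            by_contra hne
            exact hts (Finset.mem_filter.2 ⟨Finset.mem_univ t, hne⟩)
          rw [this, zero_mul]
      exact ⟨t0, le_antisymm (not_lt.1 hngt) (not_lt.1 hnlt)⟩
  apply strictMono_eq_of_range hA.1 hB.1
  intro p
  rw [key A piv hA p, key B piv' hB p, hspan]

lemma rref_unique_s13 (hA : IsRREFPiv A piv) (hB : IsRREFPiv B piv')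
    (hspan : Submodule.span F (Set.range A) = Submodule.span F (Set.range B)) :
    piv = piv' ∧ A = B := by
  have hpp : piv = piv' := rref_piv_unique hA hB hspan
  subst hpp
  refine ⟨rfl, ?_⟩
  funext t
  have hmem : A t ∈ Submodule.span F (Set.range B) := by
    rw [← hspan]
    exact Submodule.subset_span ⟨t, rfl⟩
  have hrep := rref_repr hB hmem
  rw [hrep, Fintype.sum_eq_single t (fun s hs => by rw [hA.2.2.2 s t (Ne.symm hs), zero_smul])]
  rw [hA.2.1 t, one_smul]

lemma generatesRREF_unique {X : Submodule F (Fin n → F)}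
    (hA : GeneratesRREF A piv X) (hB : GeneratesRREF B piv' X) : piv = piv' ∧ A = B :=
  rref_unique_s13 hA.1 hB.1 (hA.2.2.trans hB.2.2.symm)

lemma generatesRREF_finrank {X : Submodule F (Fin n → F)} (hA : GeneratesRREF A piv X) :
    Module.finrank F X = k := by
  rw [← hA.2.2, finrank_span_eq_card hA.2.1, Fintype.card_fin]

lemma generatesRREF_span (hA : IsRREFPiv A piv) :
    GeneratesRREF A piv (Submodule.span F (Set.range A)) :=
  ⟨hA, rref_linearIndependent hA, rfl⟩

end LinAlg
section Diagrams

open Finset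

variable {n k : ℕ}

/-- the column-count diagram of a pivot configuration -/
def GCol (piv : Fin k → Fin n) (c : Fin (n - k) → Fin n) : Fin (n - k) → Fin (k + 1) :=
  fun i => ⟨diagCol piv c i, Nat.lt_succ_of_le (diagCol_le_k i)⟩

lemma GCol_mem_ferrersBox {piv : Fin k → Fin n} {c : Fin (n - k) → Fin n}
    (hc : NPEnum piv c) : GCol piv c ∈ ferrersBox k (n - k) := by
  rw [ferrersBox, Finset.mem_filter]
  refine ⟨Finset.mem_univ _, fun i j hij => ?_⟩
  show (GCol piv c j : ℕ) ≤ (GCol piv c i : ℕ)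
  exact diagCol_anti hc hij

lemma sum_GCol {piv : Fin k → Fin n} {c : Fin (n - k) → Fin n} :
    ∑ i, ((GCol piv c i : ℕ)) = diagSize piv c := rfl

/-- the candidate non-pivot enumeration attached to a diagram -/
def cOf (G : Fin (n - k) → Fin (k + 1)) : Fin (n - k) → Fin n :=
  fun i => ⟨(G i : ℕ) + (n - k - 1 - (i : ℕ)), by
    have h1 := i.isLt
    have h2 := (G i).isLt
    omega⟩

lemma cOf_strictAnti {G : Fin (n - k) → Fin (k + 1)} (hG : G ∈ ferrersBox k (n - k))
    {i i' : Fin (n - k)} (h : i < i') : cOf G i' < cOf G i := by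
  have hmono := (Finset.mem_filter.1 hG).2 i i' h.le
  have h1 := i'.isLt
  have hv : (G i' : ℕ) ≤ (G i : ℕ) := hmono
  show ((G i' : ℕ) + (n - k - 1 - (i' : ℕ))) < ((G i : ℕ) + (n - k - 1 - (i : ℕ)))
  have hii' : (i : ℕ) < (i' : ℕ) := h
  omega

lemma exists_piv_of_ferrers (hkn : k ≤ n) {G : Fin (n - k) → Fin (k + 1)}
    (hG : G ∈ ferrersBox k (n - k)) :
    ∃ piv : Fin k → Fin n, StrictMono piv ∧ NPEnum piv (cOf G) := by
  classical
  have hinj : Function.Injective (cOf G) := by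
    intro i j hij
    by_contra hne
    rcases lt_or_gt_of_ne hne with h | h
    · exact absurd hij (cOf_strictAnti hG h).ne'
    · exact absurd hij (cOf_strictAnti hG h).ne
  set s : Finset (Fin n) := Finset.univ \ Finset.image (cOf G) Finset.univ with hs
  have hcard : s.card = k := by
    rw [hs, Finset.card_sdiff_of_subset (Finset.subset_univ _), Finset.card_univ, Fintype.card_fin,
      Finset.card_image_of_injective _ hinj, Finset.card_univ, Fintype.card_fin]
    omega
  refine ⟨s.orderEmbOfFin hcard, (s.orderEmbOfFin hcard).strictMono, ?_, ?_⟩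
  · intro i i' h
    exact cOf_strictAnti hG h
  · intro p
    constructor
    · rintro ⟨i, rfl⟩
      rintro ⟨r, hr⟩
      have hmem : s.orderEmbOfFin hcard r ∈ s := s.orderEmbOfFin_mem hcard r
      have := (Finset.mem_sdiff.1 hmem).2
      rw [hr] at this
      exact this (Finset.mem_image.2 ⟨i, Finset.mem_univ i, rfl⟩)
    · intro hp
      by_contra hno
      have hpmem : p ∈ s := by
        refine Finset.mem_sdiff.2 ⟨Finset.mem_univ p, fun hmem => ?_⟩
        rcases Finset.mem_image.1 hmem with ⟨i, _, hi⟩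
        exact hno ⟨i, hi⟩
      have : p ∈ Set.range (s.orderEmbOfFin hcard) := by
        rw [Finset.range_orderEmbOfFin]
        exact hpmem
      rcases this with ⟨r, hr⟩
      exact hp ⟨r, hr⟩

lemma GCol_eq_of_cOf {piv : Fin k → Fin n} {G : Fin (n - k) → Fin (k + 1)}
    (hpiv : Function.Injective piv) (hc : NPEnum piv (cOf G)) :
    GCol piv (cOf G) = G := by
  funext i
  apply Fin.ext
  have h := diagCol_add hpiv hc i
  have h2 : (cOf G i : ℕ) = (G i : ℕ) + (n - k - 1 - (i : ℕ)) := rfl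
  show diagCol piv (cOf G) i = (G i : ℕ)
  omega

/-- the key bijection: counting pivot configurations by their diagrams -/
lemma card_pivots (hkn : k ≤ n) (Q : (Fin (n - k) → Fin (k + 1)) → Prop)
    [DecidablePred Q] :
    ((Finset.univ : Finset (Fin k → Fin n)).filter
        (fun pv => StrictMono pv ∧ Q (GCol pv (npe pv)))).card =
      ((ferrersBox k (n - k)).filter Q).card := by
  classical
  apply Finset.card_bij (fun pv _ => GCol pv (npe pv))
  · rintro pv hpv
    rw [Finset.mem_filter] at hpv ⊢
    exact ⟨GCol_mem_ferrersBox (npe_spec hpv.2.1.injective), hpv.2.2⟩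
  · intro pv hpv pv' hpv' heq
    rw [Finset.mem_filter] at hpv hpv'
    have h1 : NPEnum pv (npe pv) := npe_spec hpv.2.1.injective
    have h1' : NPEnum pv' (npe pv') := npe_spec hpv'.2.1.injective
    have hcc : npe pv = npe pv' := by
      funext i
      have e1 := diagCol_add hpv.2.1.injective h1 i
      have e1' := diagCol_add hpv'.2.1.injective h1' i
      have e2 : diagCol pv (npe pv) i = diagCol pv' (npe pv') i := by
        have := congrFun heq i
        exact congrArg Fin.val this
      apply Fin.ext
      omega
    apply strictMono_eq_of_range hpv.2.1 hpv'.2.1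
    intro p
    constructor
    · intro hex
      by_contra hno
      rcases (h1'.2 p).2 hno with ⟨i, hi⟩
      rw [← hcc] at hi
      exact (h1.2 p).1 ⟨i, hi⟩ hex
    · intro hex
      by_contra hno
      rcases (h1.2 p).2 hno with ⟨i, hi⟩
      rw [hcc] at hi
      exact (h1'.2 p).1 ⟨i, hi⟩ hex
  · intro G hG
    rw [Finset.mem_filter] at hG
    rcases exists_piv_of_ferrers hkn hG.1 with ⟨pv, hpvm, hpvn⟩
    have hnpe : npe pv = cOf G := npe_eq hpvm.injective hpvn
    have hgg : GCol pv (npe pv) = G := by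
      rw [hnpe]
      exact GCol_eq_of_cOf hpvm.injective hpvn
    exact ⟨pv, Finset.mem_filter.2 ⟨Finset.mem_univ _, hpvm, by rw [hgg]; exact hG.2⟩, hgg⟩

/-- `a` strictly precedes `b`: more dots at the least column where they differ -/
def Lpre {η K : ℕ} (a b : Fin η → Fin K) : Prop :=
  ∃ i, (∀ t, t < i → (a t : ℕ) = (b t : ℕ)) ∧ (b i : ℕ) < (a i : ℕ)

instance Lpre.decidable {η K : ℕ} (a b : Fin η → Fin K) : Decidable (Lpre a b) := by
  unfold Lpre; infer_instance

lemma Lpre_irrefl {η K : ℕ} (a : Fin η → Fin K) : ¬Lpre a a := by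
  rintro ⟨i, _, h⟩
  exact lt_irrefl _ h

lemma Lpre_trans {η K : ℕ} {a b c : Fin η → Fin K} (h1 : Lpre a b) (h2 : Lpre b c) :
    Lpre a c := by
  rcases h1 with ⟨i, hai, hbi⟩
  rcases h2 with ⟨j, haj, hbj⟩
  rcases lt_trichotomy i j with h | h | h
  · exact ⟨i, fun t ht => (hai t ht).trans (haj t (ht.trans h)), by rw [← haj i h]; exact hbi⟩
  · subst h
    exact ⟨i, fun t ht => (hai t ht).trans (haj t ht), hbj.trans hbi⟩
  · exact ⟨j, fun t ht => (hai t (ht.trans h)).trans (haj t ht), by rw [hai j h]; exact hbj⟩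

lemma Lpre_trichotomy {η K : ℕ} {a b : Fin η → Fin K} (h : a ≠ b) : Lpre a b ∨ Lpre b a := by
  classical
  have hne : (Finset.univ.filter (fun i : Fin η => a i ≠ b i)).Nonempty := by
    by_contra hemp
    rw [Finset.not_nonempty_iff_eq_empty] at hemp
    apply h
    funext i
    by_contra hne
    have : i ∈ Finset.univ.filter (fun i : Fin η => a i ≠ b i) :=
      Finset.mem_filter.2 ⟨Finset.mem_univ i, hne⟩
    rw [hemp] at this
    exact absurd this (Finset.notMem_empty i)
  set i0 := (Finset.univ.filter (fun i : Fin η => a i ≠ b i)).min' hne with hi0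
  have hmem := (Finset.univ.filter (fun i : Fin η => a i ≠ b i)).min'_mem hne
  have hne0 : a i0 ≠ b i0 := (Finset.mem_filter.1 hmem).2
  have hagree : ∀ t, t < i0 → (a t : ℕ) = (b t : ℕ) := by
    intro t ht
    by_contra hnet
    have : i0 ≤ t := Finset.min'_le _ t (Finset.mem_filter.2 ⟨Finset.mem_univ t,
      fun hh => hnet (congrArg Fin.val hh)⟩)
    exact absurd ht (not_lt.2 this)
  rcases lt_or_gt_of_ne (fun hv => hne0 (Fin.ext hv) : (a i0 : ℕ) ≠ (b i0 : ℕ)) with h' | h'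
  · exact Or.inr ⟨i0, fun t ht => (hagree t ht).symm, h'⟩
  · exact Or.inl ⟨i0, hagree, h'⟩

/-- rank counting for the `Lpre` order on any finset -/
lemma rank_count {η K : ℕ} (s : Finset (Fin η → Fin K)) {x : Fin η → Fin K} (hx : x ∈ s) :
    (s.filter (fun y => (s.filter (fun z => Lpre z y)).card <
        (s.filter (fun z => Lpre z x)).card)).card = (s.filter (fun z => Lpre z x)).card := by
  classical
  congr 1
  apply Finset.filter_congr
  intro y hy
  constructor
  · intro hlt
    by_contra hno
    have hxy : x = y ∨ Lpre x y := by
      by_cases hxy : x = y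
      · exact Or.inl hxy
      · rcases Lpre_trichotomy hxy with h | h
        · exact Or.inr h
        · exact absurd h hno
    rcases hxy with rfl | hxy
    · exact lt_irrefl _ hlt
    · have : (s.filter (fun z => Lpre z x)).card < (s.filter (fun z => Lpre z y)).card := by
        apply Finset.card_lt_card
        rw [Finset.ssubset_iff_of_subset]
        · exact ⟨x, Finset.mem_filter.2 ⟨hx, hxy⟩,
            fun hmem => Lpre_irrefl x (Finset.mem_filter.1 hmem).2⟩
        · intro z hz
          rw [Finset.mem_filter] at hz ⊢
          exact ⟨hz.1, Lpre_trans hz.2 hxy⟩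
      omega
  · intro hyx
    apply Finset.card_lt_card
    rw [Finset.ssubset_iff_of_subset]
    · exact ⟨y, Finset.mem_filter.2 ⟨hy, hyx⟩,
        fun hmem => Lpre_irrefl y (Finset.mem_filter.1 hmem).2⟩
    · intro z hz
      rw [Finset.mem_filter] at hz ⊢
      exact ⟨hz.1, Lpre_trans hz.2 hyx⟩

end Diagrams
section Count2

attribute [local instance] Classical.propDecidable

open Finset

variable {q n k : ℕ} {F : Type} [Field F] [Fintype F]
variable {piv : Fin k → Fin n} {c : Fin (n - k) → Fin n}

lemma card_rref_filterF (e : F ≃ Fin q) (hpiv : StrictMono piv) (hc : NPEnum piv c) :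
    ((Finset.univ : Finset (Fin k → Fin n → F)).filter (fun B => IsRREFPiv B piv)).card =
      q ^ diagSize piv c := by
  rw [← Fintype.card_subtype, ← Nat.card_eq_fintype_card, card_rref e hpiv hc]

lemma card_rref_lt_filterF (e : F ≃ Fin q) (hpiv : StrictMono piv) (hc : NPEnum piv c)
    {A0 : Fin k → Fin n → F} (hA0 : IsRREFPiv A0 piv) :
    ((Finset.univ : Finset (Fin k → Fin n → F)).filter
        (fun B => IsRREFPiv B piv ∧ xVal q e B piv c < xVal q e A0 piv c)).card =
      xVal q e A0 piv c := by
  rw [← Fintype.card_subtype, ← Nat.card_eq_fintype_card, card_rref_lt e hpiv hc hA0]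

/-- the rank of a diagram among the diagrams of the same size -/
noncomputable def rankOf {n k : ℕ} (G : Fin (n - k) → Fin (k + 1)) : ℕ :=
  (((ferrersBox k (n - k)).filter
      (fun G' : Fin (n - k) → Fin (k + 1) => (∑ i, (G' i : ℕ)) = ∑ i, (G i : ℕ))).filter
    (fun G' => Lpre G' G)).card

lemma diagInd_eq_rankOf (piv : Fin k → Fin n) (c : Fin (n - k) → Fin n) :
    diagInd piv c = rankOf (GCol piv c) := by
  rw [diagInd, rankOf, Finset.filter_filter]
  congr 1

lemma rankOf_eq_of_sum {G : Fin (n - k) → Fin (k + 1)} {m : ℕ}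
    (hGs : (∑ i, (G i : ℕ)) = m) :
    rankOf G = (((ferrersBox k (n - k)).filter
        (fun G' : Fin (n - k) → Fin (k + 1) => (∑ i, (G' i : ℕ)) = m)).filter
      (fun G' => Lpre G' G)).card := by
  rw [rankOf, hGs]

lemma card_pivots_size (hkn : k ≤ n) (j : ℕ) :
    ((Finset.univ : Finset (Fin k → Fin n)).filter
        (fun pv => StrictMono pv ∧ diagSize pv (npe pv) = j)).card = pBox j k (n - k) := by
  have h := card_pivots (n := n) hkn (Q := fun G : Fin (n - k) → Fin (k + 1) =>
    (∑ i, (G i : ℕ)) = j)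
  rw [pBox]
  refine Eq.trans ?_ (h.trans ?_) <;> congr 1

lemma card_pivots_rank (hkn : k ≤ n) (hpiv : StrictMono piv) (hc : NPEnum piv c) :
    ((Finset.univ : Finset (Fin k → Fin n)).filter
        (fun pv => StrictMono pv ∧ diagSize pv (npe pv) = diagSize piv c ∧
          diagInd pv (npe pv) < diagInd piv c)).card = diagInd piv c := by
  set mX := diagSize piv c with hmX
  set Sm := (ferrersBox k (n - k)).filter
    (fun G : Fin (n - k) → Fin (k + 1) => (∑ i, (G i : ℕ)) = mX) with hSm
  have hGX : GCol piv c ∈ Sm := by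
    rw [hSm, Finset.mem_filter]
    exact ⟨GCol_mem_ferrersBox hc, sum_GCol⟩
  have hIX : diagInd piv c = (Sm.filter (fun G => Lpre G (GCol piv c))).card := by
    rw [diagInd_eq_rankOf piv c, rankOf_eq_of_sum (sum_GCol.trans hmX.symm)]
  have h := card_pivots (n := n) hkn (Q := fun G : Fin (n - k) → Fin (k + 1) =>
    (∑ i, (G i : ℕ)) = mX ∧ rankOf G < diagInd piv c)
  refine Eq.trans ?_ (h.trans ?_)
  · congr 1
    apply Finset.filter_congr
    intro pv _
    constructor
    · rintro ⟨hsm, hsz, hind⟩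
      rw [diagInd_eq_rankOf pv (npe pv)] at hind
      exact ⟨hsm, sum_GCol.trans hsz, hind⟩
    · rintro ⟨hsm, hsz, hind⟩
      rw [← diagInd_eq_rankOf pv (npe pv)] at hind
      exact ⟨hsm, sum_GCol.symm.trans hsz, hind⟩
  · have hfe : (ferrersBox k (n - k)).filter (fun G : Fin (n - k) → Fin (k + 1) =>
        (∑ i, (G i : ℕ)) = mX ∧ rankOf G < diagInd piv c) =
        Sm.filter (fun G => (Sm.filter (fun G' => Lpre G' G)).card <
          (Sm.filter (fun G' => Lpre G' (GCol piv c))).card) := by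
      rw [hSm, Finset.filter_filter]
      apply Finset.filter_congr
      intro G _
      constructor
      · rintro ⟨hs, hr⟩
        rw [rankOf_eq_of_sum hs] at hr
        rw [← hSm] at hr ⊢
        rw [← hIX]
        exact ⟨hs, hr⟩
      · rintro ⟨hs, hr⟩
        rw [← hSm, ← hIX] at hr
        rw [rankOf_eq_of_sum hs, ← hSm]
        exact ⟨hs, hr⟩
    rw [hfe, rank_count Sm hGX, ← hIX]

end Count2
section Final

open Finset

lemma piv_eq_of_diagCol_eq {n k : ℕ} {pv piv : Fin k → Fin n} {d c : Fin (n - k) → Fin n}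
    (hsm : StrictMono pv) (hd : NPEnum pv d) (hpiv : StrictMono piv) (hc : NPEnum piv c)
    (h : ∀ i, diagCol pv d i = diagCol piv c i) : pv = piv := by
  have hdc : d = c := by
    funext i
    have e1 := diagCol_add hsm.injective hd i
    have e2 := diagCol_add hpiv.injective hc i
    have e3 := h i
    apply Fin.ext
    omega
  subst hdc
  apply strictMono_eq_of_range hsm hpiv
  intro p
  constructor
  · intro hex
    by_contra hno
    rcases (hc.2 p).2 hno with ⟨i, hi⟩
    exact (hd.2 p).1 ⟨i, hi⟩ hex
  · intro hex
    by_contra hno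
    rcases (hd.2 p).2 hno with ⟨i, hi⟩
    exact (hc.2 p).1 ⟨i, hi⟩ hex

end Final

/-- **The enumerative-encoding formula for the Ferrers tableaux form (`Ind_1`).**
Let `q` be a prime power, `F` a field with `q` elements identified with `{0,…,q-1}`
via `e`, `0 ≤ k ≤ n`, and let `X` be a `k`-dimensional subspace of `F^n` with RREF
generator matrix `A`, pivots `piv`, and non-pivot positions enumerated by `c`.
Then the number of `k`-dimensional subspaces `Y` with `Y < X` in the Ferrers-tableaux
order equals
`∑_{i=|F_X|+1}^{k(n-k)} α_i q^i + ind_{|F_X|}(F_X) q^{|F_X|} + {x}`,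
where `α_i = p(i,k,n-k)`. -/
theorem stmt_13 (q n k : ℕ) (hq : IsPrimePow q) (F : Type) [Field F] [Fintype F]
    (hF : Fintype.card F = q) (hkn : k ≤ n)
    (e : F ≃ Fin q) (he0 : (e 0 : ℕ) = 0) (he1 : (e 1 : ℕ) = 1)
    (X : Submodule F (Fin n → F)) (A : Fin k → Fin n → F) (piv : Fin k → Fin n)
    (c : Fin (n - k) → Fin n) (hA : GeneratesRREF A piv X) (hc : NPEnum piv c) :
    Nat.card {Y : Submodule F (Fin n → F) //
        Module.finrank F Y = k ∧ ftLt q e n k Y X} =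
      (∑ i ∈ Finset.Icc (diagSize piv c + 1) (k * (n - k)), pBox i k (n - k) * q ^ i) +
        diagInd piv c * q ^ diagSize piv c + xVal q e A piv c := by
  classical
  have hpiv : StrictMono piv := hA.1.1
  have hnpec : npe piv = c := npe_eq hpiv.injective hc
  set Cond : (Fin k → Fin n) → (Fin k → Fin n → F) → Prop := fun pv B =>
    diagSize piv c < diagSize pv (npe pv) ∨
      (diagSize pv (npe pv) = diagSize piv c ∧ diagInd pv (npe pv) < diagInd piv c) ∨
      ((∀ i, diagCol pv (npe pv) i = diagCol piv c i) ∧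
        xVal q e B pv (npe pv) < xVal q e A piv c) with hCond
  -- Step A : the counted set is equivalent to the set of pairs (pivots, RREF matrix)
  have hstepA : Nat.card {Y : Submodule F (Fin n → F) //
      Module.finrank F Y = k ∧ ftLt q e n k Y X} =
      ((Finset.univ : Finset ((Fin k → Fin n) × (Fin k → Fin n → F))).filter
        (fun pa => IsRREFPiv pa.2 pa.1 ∧ Cond pa.1 pa.2)).card := by
    have hg : ∀ t : {pa : (Fin k → Fin n) × (Fin k → Fin n → F) //
        IsRREFPiv pa.2 pa.1 ∧ Cond pa.1 pa.2},
        Module.finrank F (Submodule.span F (Set.range t.1.2)) = k ∧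
          ftLt q e n k (Submodule.span F (Set.range t.1.2)) X := by
      rintro ⟨⟨pv, B⟩, hB, hcond⟩
      have hgen := generatesRREF_span (F := F) hB
      refine ⟨generatesRREF_finrank hgen, ?_⟩
      exact ⟨B, pv, npe pv, A, piv, c, hgen, npe_spec hB.1.injective, hA, hc, hcond⟩
    let g : {pa : (Fin k → Fin n) × (Fin k → Fin n → F) //
        IsRREFPiv pa.2 pa.1 ∧ Cond pa.1 pa.2} →
        {Y : Submodule F (Fin n → F) // Module.finrank F Y = k ∧ ftLt q e n k Y X} :=
      fun t => ⟨Submodule.span F (Set.range t.1.2), hg t⟩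
    have hbij : Function.Bijective g := by
      constructor
      · rintro ⟨⟨pv1, B1⟩, hB1, hc1⟩ ⟨⟨pv2, B2⟩, hB2, hc2⟩ heq
        have hspan : Submodule.span F (Set.range B1) = Submodule.span F (Set.range B2) :=
          congrArg Subtype.val heq
        obtain ⟨hp, hB⟩ := rref_unique_s13 hB1 hB2 hspan
        apply Subtype.ext
        exact Prod.ext hp hB
      · rintro ⟨Y, hfin, hlt⟩
        obtain ⟨BY, pvY, cY, BX, pvX, cX, hGY, hcY, hGX, hcX, hdisj⟩ := hlt
        obtain ⟨hpX, hBX⟩ := generatesRREF_unique hGX hA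
        subst hpX hBX
        have hcXc : cX = c := NPEnum.unique hcX hc
        subst hcXc
        have hcYnpe : cY = npe pvY := (npe_eq hGY.1.1.injective hcY).symm
        subst hcYnpe
        refine ⟨⟨(pvY, BY), hGY.1, hdisj⟩, ?_⟩
        apply Subtype.ext
        exact hGY.2.2
    rw [Nat.card_congr (Equiv.ofBijective g hbij).symm, Nat.card_eq_fintype_card,
      Fintype.card_subtype]
  rw [hstepA]
  -- Step B : fiber the count over the pivot configuration
  have hstepB : ((Finset.univ : Finset ((Fin k → Fin n) × (Fin k → Fin n → F))).filter
      (fun pa => IsRREFPiv pa.2 pa.1 ∧ Cond pa.1 pa.2)).card =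
      ∑ pv : Fin k → Fin n, ((Finset.univ : Finset (Fin k → Fin n → F)).filter
        (fun B => IsRREFPiv B pv ∧ Cond pv B)).card := by
    rw [Finset.card_filter, ← Finset.univ_product_univ, Finset.sum_product]
    simp only [Finset.card_filter]
  rw [hstepB]
  -- Step C : per-pivot count
  have hstepC : ∀ pv : Fin k → Fin n,
      ((Finset.univ : Finset (Fin k → Fin n → F)).filter
        (fun B => IsRREFPiv B pv ∧ Cond pv B)).card =
      (if StrictMono pv ∧ diagSize piv c < diagSize pv (npe pv)
        then q ^ diagSize pv (npe pv) else 0) +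
      (if StrictMono pv ∧ diagSize pv (npe pv) = diagSize piv c ∧
          diagInd pv (npe pv) < diagInd piv c then q ^ diagSize piv c else 0) +
      (if pv = piv then xVal q e A piv c else 0) := by
    intro pv
    by_cases hsm : StrictMono pv
    · have hd : NPEnum pv (npe pv) := npe_spec hsm.injective
      by_cases h1 : diagSize piv c < diagSize pv (npe pv)
      · have hfe : ((Finset.univ : Finset (Fin k → Fin n → F)).filter
            (fun B => IsRREFPiv B pv ∧ Cond pv B)) =
            ((Finset.univ : Finset (Fin k → Fin n → F)).filter (fun B => IsRREFPiv B pv)) := by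
          apply Finset.filter_congr
          intro B _
          constructor
          · exact fun h => h.1
          · exact fun h => ⟨h, Or.inl h1⟩
        have hne : pv ≠ piv := by
          intro hh
          subst hh
          rw [hnpec] at h1
          exact lt_irrefl _ h1
        rw [hfe, card_rref_filterF e hsm hd, if_pos ⟨hsm, h1⟩,
          if_neg (fun hh => absurd hh.2.1 (ne_of_gt h1)), if_neg hne]
        omega
      · by_cases h2 : diagSize pv (npe pv) = diagSize piv c ∧
            diagInd pv (npe pv) < diagInd piv c
        · have hfe : ((Finset.univ : Finset (Fin k → Fin n → F)).filter
              (fun B => IsRREFPiv B pv ∧ Cond pv B)) =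
              ((Finset.univ : Finset (Fin k → Fin n → F)).filter (fun B => IsRREFPiv B pv)) := by
            apply Finset.filter_congr
            intro B _
            constructor
            · exact fun h => h.1
            · exact fun h => ⟨h, Or.inr (Or.inl h2)⟩
          have hne : pv ≠ piv := by
            intro hh
            subst hh
            rw [hnpec] at h2
            exact lt_irrefl _ h2.2
          rw [hfe, card_rref_filterF e hsm hd, if_neg (fun hh => h1 hh.2),
            if_pos ⟨hsm, h2⟩, if_neg hne, h2.1]
          omega
        · by_cases hp : pv = piv
          · subst hp
            have hfe : ((Finset.univ : Finset (Fin k → Fin n → F)).filter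
                (fun B => IsRREFPiv B pv ∧ Cond pv B)) =
                ((Finset.univ : Finset (Fin k → Fin n → F)).filter
                  (fun B => IsRREFPiv B pv ∧ xVal q e B pv c < xVal q e A pv c)) := by
              apply Finset.filter_congr
              intro B _
              rw [hCond]
              simp only [hnpec]
              constructor
              · rintro ⟨hB, hco⟩
                rcases hco with hco | hco | hco
                · exact absurd hco (lt_irrefl _)
                · exact absurd hco.2 (lt_irrefl _)
                · exact ⟨hB, hco.2⟩
              · rintro ⟨hB, hco⟩
                refine ⟨hB, Or.inr (Or.inr ⟨?_, hco⟩)⟩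
                intros
                trivial
            rw [hfe, card_rref_lt_filterF e hsm (hnpec ▸ hd) hA.1, if_neg (fun hh => h1 hh.2),
              if_neg (fun hh => h2 hh.2), if_pos rfl]
            omega
          · have hfe : ((Finset.univ : Finset (Fin k → Fin n → F)).filter
                (fun B => IsRREFPiv B pv ∧ Cond pv B)) = ∅ := by
              rw [Finset.filter_eq_empty_iff]
              intro B _
              rintro ⟨hB, hco⟩
              rcases hco with hco | hco | hco
              · exact h1 hco
              · exact h2 hco
              · exact hp (piv_eq_of_diagCol_eq hsm hd hpiv hc hco.1)
            rw [hfe, Finset.card_empty, if_neg (fun hh => h1 hh.2),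
              if_neg (fun hh => h2 hh.2), if_neg hp]
    · have hfe : ((Finset.univ : Finset (Fin k → Fin n → F)).filter
          (fun B => IsRREFPiv B pv ∧ Cond pv B)) = ∅ := by
        rw [Finset.filter_eq_empty_iff]
        intro B _
        rintro ⟨hB, _⟩
        exact hsm hB.1
      have hne : pv ≠ piv := fun hh => hsm (hh ▸ hpiv)
      rw [hfe, Finset.card_empty, if_neg (fun hh => hsm hh.1), if_neg (fun hh => hsm hh.1),
        if_neg hne]
  simp only [hstepC]
  rw [Finset.sum_add_distrib, Finset.sum_add_distrib]
  congr 1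
  · congr 1
    -- first sum
    · rw [← Finset.sum_filter]
      have hmaps : ∀ pv ∈ (Finset.univ : Finset (Fin k → Fin n)).filter
          (fun pv => StrictMono pv ∧ diagSize piv c < diagSize pv (npe pv)),
          diagSize pv (npe pv) ∈ Finset.Icc (diagSize piv c + 1) (k * (n - k)) := by
        intro pv hpv
        rw [Finset.mem_filter] at hpv
        rw [Finset.mem_Icc]
        exact ⟨hpv.2.2, diagSize_le pv (npe pv)⟩
      rw [← Finset.sum_fiberwise_of_maps_to hmaps (fun pv => q ^ diagSize pv (npe pv))]
      apply Finset.sum_congr rfl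
      intro j hj
      rw [Finset.mem_Icc] at hj
      have hinner : ∀ pv ∈ ((Finset.univ : Finset (Fin k → Fin n)).filter
          (fun pv => StrictMono pv ∧ diagSize piv c < diagSize pv (npe pv))).filter
          (fun pv => diagSize pv (npe pv) = j), q ^ diagSize pv (npe pv) = q ^ j := by
        intro pv hpv
        rw [Finset.mem_filter] at hpv
        rw [hpv.2]
      rw [Finset.sum_congr rfl hinner, Finset.sum_const, smul_eq_mul]
      have hsets : ((Finset.univ : Finset (Fin k → Fin n)).filter
          (fun pv => StrictMono pv ∧ diagSize piv c < diagSize pv (npe pv))).filter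
          (fun pv => diagSize pv (npe pv) = j) =
          (Finset.univ : Finset (Fin k → Fin n)).filter
            (fun pv => StrictMono pv ∧ diagSize pv (npe pv) = j) := by
        rw [Finset.filter_filter]
        apply Finset.filter_congr
        intro pv _
        constructor
        · rintro ⟨⟨hsm, _⟩, hsz⟩
          exact ⟨hsm, hsz⟩
        · rintro ⟨hsm, hsz⟩
          exact ⟨⟨hsm, by omega⟩, hsz⟩
      rw [hsets, card_pivots_size hkn j]
    -- second sum
    · rw [← Finset.sum_filter, Finset.sum_const, smul_eq_mul,
        card_pivots_rank hkn hpiv hc]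
  -- third sum
  · rw [Finset.sum_ite_eq' Finset.univ piv (fun _ => xVal q e A piv c),
      if_pos (Finset.mem_univ piv)]
end
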